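/- arXiv:1705.10704 — 7 statements merged into one kernel-verified Lean document; each statement's English description precedes it below -/
import Mathlib

section
/- Let λ ∈ (0,1) and for each integer n ≥ 1 let Bⁿ(z) = ((z−λ)/(1−λz))ⁿ. Then there exists a constant K = K(λ) > 0 such that for every n ≥ 1 and every integer k ≥ 0 the k-th Taylor coefficient at 0 of the function (1 − z²)·Bⁿ(z) has absolute value at most K/√n; that is, ‖(1−z²)Bⁿ‖_{l∞A} ≤ K/√n. -/
/-!
On the unit circle `b_λ(e^{iθ}) = e^{iφ(θ)}`, where `φ' = (1 - λ²) / |1 - λe^{iθ}|²` is the Poisson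
kernel, and `1 - e^{2iθ} = -2i sin θ · e^{iθ}`. Cauchy's formula on the unit circle therefore writes
the `k`-th coefficient of `(1 - z²) b_λⁿ` as `-(i/π) ∫_{-π}^{π} sin θ · e^{iΨ(θ)} dθ` with the odd
phase `Ψ = nφ + (1 - k)θ`, and oddness reduces the integral to `[0, π]`. There
`Ψ'' = nφ'' ≤ -nκ sin θ` with `κ = 2λ(1 - λ²)/(1 + λ)⁴`, so `Ψ'` is decreasing. Where
`|Ψ'| ≥ √(nκ)`, integrating by parts against `e^{iΨ}` gives `O(1/√(nκ))` (van der Corput's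
first-derivative test); on the remaining interval `[α, β]` the weight alone contributes
`∫_α^β sin ≤ (Ψ'(α) - Ψ'(β)) / (nκ) ≤ 2 / √(nκ)`. This works because the weight `sin θ` coming
from `1 - z²` vanishes exactly where the curvature `φ''` does.
-/

open Real Set MeasureTheory intervalIntegral
open Complex (I)
open scoped Complex NNReal ComplexConjugate

theorem norm_integral_smul_deriv_le {u u' : ℝ → ℝ} {v v' : ℝ → ℂ} {a b : ℝ} (hab : a ≤ b)
    (hu : ∀ x ∈ Icc a b, HasDerivAt u (u' x) x) (hv : ∀ x ∈ Icc a b, HasDerivAt v (v' x) x)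
    (hu' : IntervalIntegrable u' volume a b) (hv' : IntervalIntegrable v' volume a b)
    (hv1 : ∀ x ∈ Icc a b, ‖v x‖ ≤ 1) :
    ‖∫ x in a..b, u x • v' x‖ ≤ |u a| + |u b| + ∫ x in a..b, |u' x| := by
  rw [← uIcc_of_le hab] at hu hv
  rw [integral_smul_deriv_eq_deriv_smul hu hv hu' hv']
  have hends : ∀ x ∈ Icc a b, ‖u x • v x‖ ≤ |u x| := fun x hx => by
    simpa [norm_smul] using mul_le_of_le_one_right (abs_nonneg (u x)) (hv1 x hx)
  have hint : ‖∫ x in a..b, u' x • v x‖ ≤ ∫ x in a..b, |u' x| :=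
    norm_integral_le_of_norm_le hab (.of_forall fun x hx => by
      simpa [norm_smul] using mul_le_of_le_one_right (abs_nonneg (u' x))
        (hv1 x (Ioc_subset_Icc_self hx))) hu'.abs
  have := norm_sub_le (u b • v b) (u a • v a)
  have := norm_sub_le (u b • v b - u a • v a) (∫ x in a..b, u' x • v x)
  linarith [hends a (left_mem_Icc.2 hab), hends b (right_mem_Icc.2 hab)]

theorem integral_abs_deriv_div_le {g g' Ψ' Ψ'' : ℝ → ℝ} {a b Λ : ℝ} (hab : a ≤ b) (hΛ : 0 < Λ)
    (hΨ' : ∀ x, HasDerivAt Ψ' (Ψ'' x) x) (hΨ'' : Continuous Ψ'')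
    (hint : IntervalIntegrable (fun x => g' x / Ψ' x - g x * Ψ'' x / Ψ' x ^ 2) volume a b)
    (hg1 : ∀ x ∈ Icc a b, |g x| ≤ 1) (hg'1 : ∀ x ∈ Icc a b, |g' x| ≤ 1)
    (hΛΨ' : ∀ x ∈ Icc a b, Λ ≤ |Ψ' x|) (hΨ''0 : ∀ x ∈ Icc a b, Ψ'' x ≤ 0) :
    ∫ x in a..b, |g' x / Ψ' x - g x * Ψ'' x / Ψ' x ^ 2| ≤ (2 + (b - a)) / Λ := by
  have hne : ∀ x ∈ uIcc a b, Ψ' x ≠ 0 := fun x hx =>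
    abs_pos.1 (hΛ.trans_le (hΛΨ' x (by rwa [uIcc_of_le hab] at hx)))
  have hΨ'c : Continuous Ψ' := continuous_iff_continuousAt.2 fun x => (hΨ' x).continuousAt
  have hdom : IntervalIntegrable (fun x => -Ψ'' x / Ψ' x ^ 2) volume a b :=
    (ContinuousOn.div (by fun_prop) (by fun_prop) fun x hx =>
      pow_ne_zero 2 (hne x hx)).intervalIntegrable
  have hftc : ∫ x in a..b, -Ψ'' x / Ψ' x ^ 2 = (Ψ' b)⁻¹ - (Ψ' a)⁻¹ :=
    integral_eq_sub_of_hasDerivAt (fun x hx => by simpa [neg_div] using (hΨ' x).inv (hne x hx))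
      hdom
  have hinv : ∀ x ∈ Icc a b, |(Ψ' x)⁻¹| ≤ Λ⁻¹ := fun x hx => by
    rw [abs_inv]; exact inv_anti₀ hΛ (hΛΨ' x hx)
  have hpt : ∀ x ∈ Icc a b,
      |g' x / Ψ' x - g x * Ψ'' x / Ψ' x ^ 2| ≤ Λ⁻¹ + -Ψ'' x / Ψ' x ^ 2 := fun x hx => by
    have hcurv : 0 ≤ -Ψ'' x / Ψ' x ^ 2 := div_nonneg (by linarith [hΨ''0 x hx]) (sq_nonneg _)
    calc |g' x / Ψ' x - g x * Ψ'' x / Ψ' x ^ 2|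
        ≤ |g' x| * |(Ψ' x)⁻¹| + |g x| * |-Ψ'' x / Ψ' x ^ 2| := by
          refine (abs_sub _ _).trans (le_of_eq ?_)
          rw [← abs_mul, ← abs_mul, ← abs_neg (g x * _)]
          ring_nf
      _ ≤ 1 * Λ⁻¹ + 1 * (-Ψ'' x / Ψ' x ^ 2) := by
          rw [abs_of_nonneg hcurv]
          gcongr
          exacts [hg'1 x hx, hinv x hx, hg1 x hx]
      _ = Λ⁻¹ + -Ψ'' x / Ψ' x ^ 2 := by ring
  calc ∫ x in a..b, |g' x / Ψ' x - g x * Ψ'' x / Ψ' x ^ 2|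
      ≤ ∫ x in a..b, (Λ⁻¹ + -Ψ'' x / Ψ' x ^ 2) :=
        integral_mono_on hab hint.abs (intervalIntegrable_const.add hdom) hpt
    _ = (b - a) / Λ + ((Ψ' b)⁻¹ - (Ψ' a)⁻¹) := by
        rw [integral_add intervalIntegrable_const hdom, hftc, intervalIntegral.integral_const,
          smul_eq_mul, div_eq_mul_inv]
    _ ≤ (2 + (b - a)) / Λ := by
        have := hinv a (left_mem_Icc.2 hab); have := hinv b (right_mem_Icc.2 hab)
        rw [add_div, div_eq_mul_inv 2]
        linarith [le_abs_self (Ψ' b)⁻¹, neg_abs_le (Ψ' a)⁻¹]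

theorem norm_integral_mul_exp_le {g g' Ψ Ψ' Ψ'' : ℝ → ℝ} {a b Λ : ℝ} (hab : a ≤ b) (hΛ : 0 < Λ)
    (hg : ∀ x, HasDerivAt g (g' x) x) (hg' : Continuous g') (hΨ : ∀ x, HasDerivAt Ψ (Ψ' x) x)
    (hΨ' : ∀ x, HasDerivAt Ψ' (Ψ'' x) x) (hΨ'' : Continuous Ψ'')
    (hg1 : ∀ x ∈ Icc a b, |g x| ≤ 1) (hg'1 : ∀ x ∈ Icc a b, |g' x| ≤ 1)
    (hΛΨ' : ∀ x ∈ Icc a b, Λ ≤ |Ψ' x|) (hΨ''0 : ∀ x ∈ Icc a b, Ψ'' x ≤ 0) :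
    ‖∫ x in a..b, (g x : ℂ) * cexp (Ψ x * I)‖ ≤ (4 + (b - a)) / Λ := by
  have hne : ∀ x ∈ Icc a b, Ψ' x ≠ 0 := fun x hx => abs_pos.1 (hΛ.trans_le (hΛΨ' x hx))
  have hΨc : Continuous Ψ := continuous_iff_continuousAt.2 fun x => (hΨ x).continuousAt
  have hΨ'c : Continuous Ψ' := continuous_iff_continuousAt.2 fun x => (hΨ' x).continuousAt
  -- `g e^{iΨ} = (g / Ψ') · (d/dx)(-i e^{iΨ})`, then integrate by parts.
  have hu : ∀ x ∈ Icc a b, HasDerivAt (fun x => g x / Ψ' x)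
      (g' x / Ψ' x - g x * Ψ'' x / Ψ' x ^ 2) x := fun x hx => by
    have := hne x hx
    exact ((hg x).div (hΨ' x) this).congr_deriv (by field_simp)
  have hv : ∀ x ∈ Icc a b,
      HasDerivAt (fun x => -I * cexp (Ψ x * I)) (Ψ' x * cexp (Ψ x * I)) x := fun x _ => by
    refine ((((hΨ x).ofReal_comp.mul_const I).cexp).const_mul (-I)).congr_deriv ?_
    linear_combination (-(Ψ' x : ℂ) * cexp ((Ψ x : ℂ) * I)) * Complex.I_sq
  have hu' : IntervalIntegrable (fun x => g' x / Ψ' x - g x * Ψ'' x / Ψ' x ^ 2) volume a b := by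
    have hgc : Continuous g := continuous_iff_continuousAt.2 fun x => (hg x).continuousAt
    refine ContinuousOn.intervalIntegrable_of_Icc hab ?_
    exact (hg'.continuousOn.div hΨ'c.continuousOn hne).sub ((hgc.mul hΨ'').continuousOn.div
      (hΨ'c.pow 2).continuousOn fun x hx => pow_ne_zero 2 (hne x hx))
  have hend : ∀ x ∈ Icc a b, |g x / Ψ' x| ≤ Λ⁻¹ := fun x hx => by
    rw [abs_div, ← one_div]
    exact div_le_div₀ zero_le_one (hg1 x hx) hΛ (hΛΨ' x hx)
  calc ‖∫ x in a..b, (g x : ℂ) * cexp (Ψ x * I)‖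
      = ‖∫ x in a..b, (g x / Ψ' x) • ((Ψ' x : ℂ) * cexp (Ψ x * I))‖ := by
        refine congrArg _ (integral_congr fun x hx => ?_)
        rw [uIcc_of_le hab] at hx
        rw [Complex.real_smul, Complex.ofReal_div, ← mul_assoc,
          div_mul_cancel₀ _ (Complex.ofReal_ne_zero.2 (hne x hx))]
    _ ≤ |g a / Ψ' a| + |g b / Ψ' b| + ∫ x in a..b, |g' x / Ψ' x - g x * Ψ'' x / Ψ' x ^ 2| :=
        norm_integral_smul_deriv_le hab hu hv hu'
          (Continuous.intervalIntegrable (by fun_prop) a b) fun x _ => by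
          simp [Complex.norm_exp_ofReal_mul_I]
    _ ≤ Λ⁻¹ + Λ⁻¹ + (2 + (b - a)) / Λ := by
        gcongr
        · exact hend a (left_mem_Icc.2 hab)
        · exact hend b (right_mem_Icc.2 hab)
        · exact integral_abs_deriv_div_le hab hΛ hΨ' hΨ'' hu' hg1 hg'1 hΛΨ' hΨ''0
    _ = (4 + (b - a)) / Λ := by ring

theorem norm_integral_le_add_of_adjacent {E : Type*} [NormedAddCommGroup E] [NormedSpace ℝ E]
    {f : ℝ → E} {a b c : ℝ} (hac : IntervalIntegrable f volume a c)
    (hcb : IntervalIntegrable f volume c b) :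
    ‖∫ x in a..b, f x‖ ≤ ‖∫ x in a..c, f x‖ + ‖∫ x in c..b, f x‖ := by
  rw [← integral_add_adjacent_intervals hac hcb]
  exact norm_add_le _ _

theorem norm_integral_sin_mul_exp_le_cos_sub_cos (Ψ : ℝ → ℝ) {a b : ℝ} (ha : 0 ≤ a)
    (hab : a ≤ b) (hb : b ≤ π) : ‖∫ x in a..b, (sin x : ℂ) * cexp (Ψ x * I)‖ ≤ cos a - cos b := by
  rw [← integral_sin]
  refine norm_integral_le_of_norm_le hab (.of_forall fun x hx => ?_)
    (continuous_sin.intervalIntegrable a b)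
  rw [norm_mul, Complex.norm_exp_ofReal_mul_I, mul_one, Complex.norm_real, norm_of_nonneg]
  exact sin_nonneg_of_nonneg_of_le_pi (ha.trans hx.1.le) (hx.2.trans hb)

theorem intervalIntegrable_sin_mul_exp {Ψ : ℝ → ℝ} (hΨ : Continuous Ψ) (a b : ℝ) :
    IntervalIntegrable (fun x => (sin x : ℂ) * cexp (Ψ x * I)) volume a b :=
  Continuous.intervalIntegrable (by fun_prop) a b

section SinWeight

variable {Ψ Ψ' Ψ'' : ℝ → ℝ} {ρ Λ a b : ℝ}

theorem mul_cos_sub_cos_le_sub (hΨ' : ∀ x, HasDerivAt Ψ' (Ψ'' x) x)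
    (hcurv : ∀ x ∈ Icc 0 π, Ψ'' x ≤ -ρ * sin x) (ha : 0 ≤ a) (hab : a ≤ b) (hb : b ≤ π) :
    ρ * (cos a - cos b) ≤ Ψ' a - Ψ' b := by
  have hanti : AntitoneOn (fun x => Ψ' x - ρ * cos x) (Icc 0 π) := by
    refine antitoneOn_of_hasDerivWithinAt_nonpos (convex_Icc 0 π)
      (HasDerivAt.continuousOn fun x _ => (hΨ' x).sub ((hasDerivAt_cos x).const_mul ρ))
      (fun x _ => ((hΨ' x).sub ((hasDerivAt_cos x).const_mul ρ)).hasDerivWithinAt)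
      fun x hx => ?_
    linarith [hcurv x (interior_subset hx)]
  linarith [hanti ⟨ha, hab.trans hb⟩ ⟨ha.trans hab, hb⟩ hab]

theorem antitoneOn_Icc_zero_pi_of_le_neg_mul_sin (hΨ' : ∀ x, HasDerivAt Ψ' (Ψ'' x) x)
    (hρ : 0 ≤ ρ) (hcurv : ∀ x ∈ Icc 0 π, Ψ'' x ≤ -ρ * sin x) : AntitoneOn Ψ' (Icc 0 π) :=
  fun a ha b hb hab => by
    have := mul_cos_sub_cos_le_sub hΨ' hcurv ha.1 hab hb.2
    nlinarith [cos_le_cos_of_nonneg_of_le_pi ha.1 hb.2 hab]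

theorem norm_integral_sin_mul_exp_le_sub_div (hΨ' : ∀ x, HasDerivAt Ψ' (Ψ'' x) x)
    (hρ : 0 < ρ) (hcurv : ∀ x ∈ Icc 0 π, Ψ'' x ≤ -ρ * sin x) (ha : 0 ≤ a) (hab : a ≤ b)
    (hb : b ≤ π) :
    ‖∫ x in a..b, (sin x : ℂ) * cexp (Ψ x * I)‖ ≤ (Ψ' a - Ψ' b) / ρ := by
  rw [le_div_iff₀ hρ, mul_comm]
  exact (mul_le_mul_of_nonneg_left (norm_integral_sin_mul_exp_le_cos_sub_cos Ψ ha hab hb)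
    hρ.le).trans (mul_cos_sub_cos_le_sub hΨ' hcurv ha hab hb)

theorem norm_integral_sin_mul_exp_le_of_le_abs_deriv (hΨ : ∀ x, HasDerivAt Ψ (Ψ' x) x)
    (hΨ' : ∀ x, HasDerivAt Ψ' (Ψ'' x) x) (hΨ'' : Continuous Ψ'') (hρ : 0 ≤ ρ)
    (hcurv : ∀ x ∈ Icc 0 π, Ψ'' x ≤ -ρ * sin x) (hΛ : 0 < Λ) (ha : 0 ≤ a) (hab : a ≤ b)
    (hb : b ≤ π) (hΛΨ' : ∀ x ∈ Icc a b, Λ ≤ |Ψ' x|) :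
    ‖∫ x in a..b, (sin x : ℂ) * cexp (Ψ x * I)‖ ≤ (4 + π) / Λ := by
  refine (norm_integral_mul_exp_le hab hΛ hasDerivAt_sin continuous_cos hΨ hΨ' hΨ''
    (fun x _ => abs_sin_le_one x) (fun x _ => abs_cos_le_one x) hΛΨ' fun x hx => ?_).trans ?_
  · have := sin_nonneg_of_nonneg_of_le_pi (ha.trans hx.1) (hx.2.trans hb)
    nlinarith [hcurv x ⟨ha.trans hx.1, hx.2.trans hb⟩]
  · gcongr; linarith

theorem norm_integral_sin_mul_exp_le_of_deriv_le (hΨ : ∀ x, HasDerivAt Ψ (Ψ' x) x)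
    (hΨ' : ∀ x, HasDerivAt Ψ' (Ψ'' x) x) (hΨ'' : Continuous Ψ'') (hρ : 0 < ρ)
    (hcurv : ∀ x ∈ Icc 0 π, Ψ'' x ≤ -ρ * sin x) (hΛ : 0 < Λ) (ha : 0 ≤ a) (hab : a ≤ b)
    (hb : b ≤ π) (hΨ'b : Ψ' b ≤ Λ) :
    ‖∫ x in a..b, (sin x : ℂ) * cexp (Ψ x * I)‖ ≤ (4 + π) / Λ + (Λ - Ψ' b) / ρ := by
  rcases le_or_gt (Ψ' a) Λ with hΨ'a | hΨ'a
  · have := norm_integral_sin_mul_exp_le_sub_div (Ψ := Ψ) hΨ' hρ hcurv ha hab hb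
    have : (Ψ' a - Ψ' b) / ρ ≤ (Λ - Ψ' b) / ρ := by gcongr
    have : 0 ≤ (4 + π) / Λ := by positivity
    linarith
  have hΨc : Continuous Ψ := continuous_iff_continuousAt.2 fun x => (hΨ x).continuousAt
  have hint := intervalIntegrable_sin_mul_exp hΨc
  have hanti := antitoneOn_Icc_zero_pi_of_le_neg_mul_sin hΨ' hρ.le hcurv
  obtain ⟨c, hc, hΨ'c⟩ := intermediate_value_Icc' hab
    (HasDerivAt.continuousOn fun x _ => hΨ' x) ⟨hΨ'b, hΨ'a.le⟩
  refine (norm_integral_le_add_of_adjacent (hint a c) (hint c b)).trans (add_le_add ?_ ?_)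
  · refine norm_integral_sin_mul_exp_le_of_le_abs_deriv hΨ hΨ' hΨ'' hρ.le hcurv hΛ ha hc.1
      (hc.2.trans hb) fun x hx => ?_
    rw [← hΨ'c]
    exact (hanti ⟨ha.trans hx.1, hx.2.trans (hc.2.trans hb)⟩ ⟨ha.trans hc.1, hc.2.trans hb⟩
      hx.2).trans (le_abs_self _)
  · rw [← hΨ'c]
    exact norm_integral_sin_mul_exp_le_sub_div hΨ' hρ hcurv (ha.trans hc.1) hc.2 hb

theorem norm_integral_sin_mul_exp_le_of_le_deriv (hΨ : ∀ x, HasDerivAt Ψ (Ψ' x) x)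
    (hΨ' : ∀ x, HasDerivAt Ψ' (Ψ'' x) x) (hΨ'' : Continuous Ψ'') (hρ : 0 < ρ)
    (hcurv : ∀ x ∈ Icc 0 π, Ψ'' x ≤ -ρ * sin x) (hΛ : 0 < Λ) (ha : 0 ≤ a) (hab : a ≤ b)
    (hb : b ≤ π) (hΨ'a : -Λ ≤ Ψ' a) :
    ‖∫ x in a..b, (sin x : ℂ) * cexp (Ψ x * I)‖ ≤ (4 + π) / Λ + (Ψ' a + Λ) / ρ := by
  rcases le_or_gt (-Λ) (Ψ' b) with hΨ'b | hΨ'b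
  · have := norm_integral_sin_mul_exp_le_sub_div (Ψ := Ψ) hΨ' hρ hcurv ha hab hb
    have : (Ψ' a - Ψ' b) / ρ ≤ (Ψ' a + Λ) / ρ := by gcongr; linarith
    have : 0 ≤ (4 + π) / Λ := by positivity
    linarith
  have hΨc : Continuous Ψ := continuous_iff_continuousAt.2 fun x => (hΨ x).continuousAt
  have hint := intervalIntegrable_sin_mul_exp hΨc
  have hanti := antitoneOn_Icc_zero_pi_of_le_neg_mul_sin hΨ' hρ.le hcurv
  obtain ⟨c, hc, hΨ'c⟩ := intermediate_value_Icc' hab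
    (HasDerivAt.continuousOn fun x _ => hΨ' x) ⟨hΨ'b.le, hΨ'a⟩
  refine (norm_integral_le_add_of_adjacent (hint a c) (hint c b)).trans ?_
  rw [add_comm]
  refine add_le_add ?_ ?_
  · refine norm_integral_sin_mul_exp_le_of_le_abs_deriv hΨ hΨ' hΨ'' hρ.le hcurv hΛ
      (ha.trans hc.1) hc.2 hb fun x hx => ?_
    have := hanti ⟨ha.trans hc.1, hc.2.trans hb⟩ ⟨ha.trans (hc.1.trans hx.1), hx.2.trans hb⟩
      hx.1
    rw [abs_of_neg (by linarith)]
    linarith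
  · have := norm_integral_sin_mul_exp_le_sub_div (Ψ := Ψ) hΨ' hρ hcurv ha hc.1 (hc.2.trans hb)
    rw [hΨ'c] at this
    simpa [sub_neg_eq_add] using this

theorem norm_integral_zero_pi_sin_mul_exp_le (hΨ : ∀ x, HasDerivAt Ψ (Ψ' x) x)
    (hΨ' : ∀ x, HasDerivAt Ψ' (Ψ'' x) x) (hΨ'' : Continuous Ψ'') (hρ : 0 < ρ)
    (hcurv : ∀ x ∈ Icc 0 π, Ψ'' x ≤ -ρ * sin x) :
    ‖∫ x in 0..π, (sin x : ℂ) * cexp (Ψ x * I)‖ ≤ (10 + 2 * π) / √ρ := by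
  have hΛ : 0 < √ρ := sqrt_pos.2 hρ
  -- The threshold `√ρ` for `|Ψ'|` balances the first-derivative bound `(4 + π) / √ρ` against the
  -- bound `2√ρ / ρ` of the interval where `|Ψ'| ≤ √ρ`.
  by_cases hsmall : ∃ c ∈ Icc 0 π, |Ψ' c| ≤ √ρ
  · obtain ⟨c, hc, hΨ'c⟩ := hsmall
    have hΨc : Continuous Ψ := continuous_iff_continuousAt.2 fun x => (hΨ x).continuousAt
    have hint := intervalIntegrable_sin_mul_exp hΨc
    have hL := norm_integral_sin_mul_exp_le_of_deriv_le hΨ hΨ' hΨ'' hρ hcurv hΛ le_rfl hc.1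
      hc.2 (abs_le.1 hΨ'c).2
    have hR := norm_integral_sin_mul_exp_le_of_le_deriv hΨ hΨ' hΨ'' hρ hcurv hΛ hc.1 hc.2
      le_rfl (abs_le.1 hΨ'c).1
    have hρΛ : √ρ / ρ = 1 / √ρ := by
      rw [div_eq_div_iff hρ.ne' hΛ.ne', one_mul, mul_self_sqrt hρ.le]
    calc _ ≤ _ := norm_integral_le_add_of_adjacent (hint 0 c) (hint c π)
      _ ≤ (4 + π) / √ρ + (√ρ - Ψ' c) / ρ + ((4 + π) / √ρ + (Ψ' c + √ρ) / ρ) :=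
          add_le_add hL hR
      _ = 2 * (4 + π) / √ρ + 2 * (√ρ / ρ) := by ring
      _ = (10 + 2 * π) / √ρ := by rw [hρΛ]; ring
  · push Not at hsmall
    refine (norm_integral_sin_mul_exp_le_of_le_abs_deriv hΨ hΨ' hΨ'' hρ.le hcurv hΛ le_rfl
      pi_pos.le le_rfl fun x hx => (hsmall x hx).le).trans ?_
    gcongr <;> linarith [pi_pos]

end SinWeight

theorem norm_integral_sin_mul_exp_le_two_mul_of_odd {Ψ : ℝ → ℝ} (hodd : Function.Odd Ψ)
    (hΨ : Continuous Ψ) (a : ℝ) :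
    ‖∫ x in -a..a, (sin x : ℂ) * cexp (Ψ x * I)‖ ≤
      2 * ‖∫ x in 0..a, (sin x : ℂ) * cexp (Ψ x * I)‖ := by
  have hneg : ∫ x in -a..0, (sin x : ℂ) * cexp (Ψ x * I) =
      -conj (∫ x in 0..a, (sin x : ℂ) * cexp (Ψ x * I)) := by
    rw [← intervalIntegral_conj, ← intervalIntegral.integral_neg, ← neg_zero,
      ← integral_comp_neg, neg_zero]
    refine integral_congr fun x _ => ?_
    rw [sin_neg, hodd.eq, map_mul, Complex.conj_ofReal, ← Complex.exp_conj, map_mul,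
      Complex.conj_ofReal, Complex.conj_I]
    push_cast
    ring_nf
  refine (norm_integral_le_add_of_adjacent (intervalIntegrable_sin_mul_exp hΨ (-a) 0)
    (intervalIntegrable_sin_mul_exp hΨ 0 a)).trans_eq ?_
  rw [hneg, norm_neg, Complex.norm_conj]
  ring

theorem hasFPowerSeriesOnBall_ofScalars_of_hasSum {F : ℂ → ℂ} {a : ℕ → ℂ} {r : ℝ≥0}
    (hr : 0 < r) (hF : ∀ z : ℂ, ‖z‖ < r → HasSum (fun k => a k * z ^ k) (F z)) :
    HasFPowerSeriesOnBall F (.ofScalars ℂ a) 0 r where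
  r_le := ENNReal.le_of_forall_nnreal_lt fun s hs => by
    have hs' : ‖(s : ℂ)‖ < r := by simpa using hs
    refine FormalMultilinearSeries.le_radius_of_tendsto _ (l := 0) ?_
    simpa [FormalMultilinearSeries.ofScalars_norm] using
      (hF s hs').summable.tendsto_atTop_zero.norm
  r_pos := by simpa using hr
  hasSum {y} hy := by
    simpa [FormalMultilinearSeries.ofScalars_apply_eq, mul_comm] using hF y (by simpa using hy)

theorem coeff_eq_integral_of_hasSum {F : ℂ → ℂ} {a : ℕ → ℂ}
    (hF : DifferentiableOn ℂ F (Metric.closedBall 0 1))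
    (hsum : ∀ z : ℂ, ‖z‖ < 1 → HasSum (fun k => a k * z ^ k) (F z)) (k : ℕ) :
    a k = (2 * π)⁻¹ * ∫ θ in -π..π, F (cexp (θ * I)) * cexp (-(k * θ) * I) := by
  have hp := (hasFPowerSeriesOnBall_ofScalars_of_hasSum one_pos (by simpa using hsum))
    |>.hasFPowerSeriesAt.eq_formalMultilinearSeries
      (hF.hasFPowerSeriesOnBall (R := 1) one_pos).hasFPowerSeriesAt
  have hk := congrArg (fun p => p k fun _ => (1 : ℂ)) hp
  simp only [FormalMultilinearSeries.ofScalars_apply_eq, cauchyPowerSeries_apply, circleIntegral,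
    deriv_circleMap, sub_zero, one_pow, smul_eq_mul, mul_one, one_div, inv_pow] at hk
  have hper := ((periodic_circleMap 0 1).comp
    fun z => z * I * ((z ^ k)⁻¹ * (z⁻¹ * F z))).intervalIntegral_add_eq 0 (-π)
  simp only [Function.comp_def, zero_add, circleMap_zero, NNReal.coe_one, Complex.ofReal_one,
    one_mul] at hper hk
  rw [show -π + 2 * π = π by ring] at hper
  rw [hk, hper, ← intervalIntegral.integral_const_mul, ← intervalIntegral.integral_const_mul]
  refine integral_congr fun θ _ => ?_
  have h1 : cexp (θ * I) ≠ 0 := Complex.exp_ne_zero _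
  have h2 : (cexp (θ * I) ^ k)⁻¹ = cexp (-(k * θ) * I) := by
    rw [← Complex.exp_nat_mul, ← Complex.exp_neg]; ring_nf
  rw [h2]
  push_cast
  field_simp

/-- `poissonKernel 0 lam (exp (θ * I))`, written out in `θ`. -/
noncomputable def circlePoissonKernel (lam θ : ℝ) : ℝ :=
  (1 - lam ^ 2) / (1 - 2 * lam * cos θ + lam ^ 2)

noncomputable def blaschkePhase (lam θ : ℝ) : ℝ := ∫ t in 0..θ, circlePoissonKernel lam t

section BlaschkePhase

variable {lam : ℝ}

theorem one_sub_two_mul_cos_add_sq_pos (hlam : |lam| < 1) (θ : ℝ) :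
    0 < 1 - 2 * lam * cos θ + lam ^ 2 := by
  have h : lam * cos θ ≤ |lam| := (le_abs_self _).trans <| by
    rw [abs_mul]; exact mul_le_of_le_one_right (abs_nonneg _) (abs_cos_le_one θ)
  nlinarith [sq_abs lam, mul_pos (sub_pos.2 hlam) (sub_pos.2 hlam)]

theorem contDiff_circlePoissonKernel (hlam : |lam| < 1) :
    ContDiff ℝ 2 (circlePoissonKernel lam) :=
  contDiff_const.div ((contDiff_const.sub (contDiff_const.mul contDiff_cos)).add contDiff_const)
    fun θ => (one_sub_two_mul_cos_add_sq_pos hlam θ).ne'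

theorem hasDerivAt_circlePoissonKernel (hlam : |lam| < 1) (θ : ℝ) :
    HasDerivAt (circlePoissonKernel lam)
      (-((1 - lam ^ 2) * (2 * lam * sin θ)) / (1 - 2 * lam * cos θ + lam ^ 2) ^ 2) θ := by
  have hD : HasDerivAt (fun θ => 1 - 2 * lam * cos θ + lam ^ 2) (2 * lam * sin θ) θ := by
    simpa using (((hasDerivAt_cos θ).const_mul (2 * lam)).const_sub 1).add_const (lam ^ 2)
  exact ((hasDerivAt_const θ (1 - lam ^ 2)).div hD
    (one_sub_two_mul_cos_add_sq_pos hlam θ).ne').congr_deriv (by ring)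

theorem deriv_circlePoissonKernel_le (hlam0 : 0 ≤ lam) (hlam1 : lam < 1) {θ : ℝ}
    (hθ : θ ∈ Icc 0 π) :
    deriv (circlePoissonKernel lam) θ ≤ -(2 * lam * (1 - lam ^ 2) / (1 + lam) ^ 4) * sin θ := by
  have hlam : |lam| < 1 := abs_lt.2 ⟨by linarith, hlam1⟩
  have hD := one_sub_two_mul_cos_add_sq_pos hlam θ
  have hD' : 1 - 2 * lam * cos θ + lam ^ 2 ≤ (1 + lam) ^ 2 := by nlinarith [neg_one_le_cos θ]
  have hsin := sin_nonneg_of_nonneg_of_le_pi hθ.1 hθ.2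
  have hc : 0 ≤ 2 * lam * (1 - lam ^ 2) * sin θ := by
    have : 0 ≤ 1 - lam ^ 2 := by nlinarith
    positivity
  rw [(hasDerivAt_circlePoissonKernel hlam θ).deriv, neg_div, neg_mul, neg_le_neg_iff]
  calc 2 * lam * (1 - lam ^ 2) / (1 + lam) ^ 4 * sin θ
      = 2 * lam * (1 - lam ^ 2) * sin θ / ((1 + lam) ^ 2) ^ 2 := by ring
    _ ≤ 2 * lam * (1 - lam ^ 2) * sin θ / (1 - 2 * lam * cos θ + lam ^ 2) ^ 2 := by gcongr
    _ = (1 - lam ^ 2) * (2 * lam * sin θ) / (1 - 2 * lam * cos θ + lam ^ 2) ^ 2 := by ring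

theorem circlePoissonKernel_even : Function.Even (circlePoissonKernel lam) := fun θ => by
  simp [circlePoissonKernel]

theorem blaschkePhase_odd : Function.Odd (blaschkePhase lam) := fun θ => by
  simp only [blaschkePhase]
  rw [← neg_zero, ← integral_comp_neg, integral_symm]
  simp [circlePoissonKernel_even.eq]

theorem hasDerivAt_blaschkePhase (hlam : |lam| < 1) (θ : ℝ) :
    HasDerivAt (blaschkePhase lam) (circlePoissonKernel lam θ) θ :=
  have h := (contDiff_circlePoissonKernel hlam).continuous
  integral_hasDerivAt_right (h.intervalIntegrable 0 θ)
    h.aestronglyMeasurable.stronglyMeasurableAtFilter h.continuousAt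

theorem one_sub_ofReal_mul_ne_zero (hlam : |lam| < 1) {z : ℂ} (hz : ‖z‖ ≤ 1) :
    1 - (lam : ℂ) * z ≠ 0 := by
  rw [sub_ne_zero]
  intro h
  have : ‖(lam : ℂ) * z‖ < 1 := by
    rw [norm_mul, Complex.norm_real, Real.norm_eq_abs]
    nlinarith [abs_nonneg lam, norm_nonneg z]
  rw [← h, norm_one] at this
  exact lt_irrefl _ this

theorem exp_mul_I_sub_mul_one_sub_mul_exp_mul_I (θ : ℝ) :
    (cexp (θ * I) - lam) * (1 - lam * cexp (θ * I)) =
      ((1 - 2 * lam * cos θ + lam ^ 2 : ℝ) : ℂ) * cexp (θ * I) := by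
  rw [Complex.exp_mul_I]
  push_cast
  linear_combination (lam : ℂ) * Complex.sin_sq_add_cos_sq (θ : ℂ) -
    lam * Complex.sin θ ^ 2 * Complex.I_sq

theorem hasDerivAt_blaschke_exp_mul_I (hlam : |lam| < 1) (θ : ℝ) :
    HasDerivAt (fun t : ℝ => (cexp (t * I) - lam) / (1 - lam * cexp (t * I)))
      (I * circlePoissonKernel lam θ * ((cexp (θ * I) - lam) / (1 - lam * cexp (θ * I)))) θ := by
  have hE : HasDerivAt (fun t : ℝ => cexp (t * I)) (I * cexp (θ * I)) θ := by
    simpa [mul_comm] using ((hasDerivAt_id θ).ofReal_comp.mul_const I).cexp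
  have hden := one_sub_ofReal_mul_ne_zero hlam (by simp [Complex.norm_exp_ofReal_mul_I] :
    ‖cexp (θ * I)‖ ≤ 1)
  have hD := (one_sub_two_mul_cos_add_sq_pos hlam θ).ne'
  have hfac := exp_mul_I_sub_mul_one_sub_mul_exp_mul_I (lam := lam) θ
  refine ((hE.sub_const _).div ((hE.const_mul _).const_sub 1) hden).congr_deriv ?_
  rw [circlePoissonKernel, Complex.ofReal_div]
  set E := cexp (θ * I)
  set D := 1 - 2 * lam * cos θ + lam ^ 2
  have hB : (E - lam) / (1 - lam * E) = D * E / (1 - lam * E) ^ 2 := by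
    rw [eq_div_iff (pow_ne_zero 2 hden), ← hfac, pow_two, ← mul_assoc, div_mul_cancel₀ _ hden]
  rw [hB]
  have hD' : (D : ℂ) ≠ 0 := Complex.ofReal_ne_zero.2 hD
  field_simp
  push_cast
  ring

theorem exp_blaschkePhase_mul_I (hlam : |lam| < 1) (θ : ℝ) :
    cexp (blaschkePhase lam θ * I) = (cexp (θ * I) - lam) / (1 - lam * cexp (θ * I)) := by
  -- `e^{-iφ} · b_λ(e^{iθ})` has zero derivative and equals `1` at `θ = 0`.
  have hs : ∀ t, HasDerivAt (fun t : ℝ => cexp (-(blaschkePhase lam t : ℂ) * I) *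
      ((cexp (t * I) - lam) / (1 - lam * cexp (t * I)))) 0 t := fun t =>
    ((((hasDerivAt_blaschkePhase hlam t).ofReal_comp.neg.mul_const I).cexp).mul
      (hasDerivAt_blaschke_exp_mul_I hlam t)).congr_deriv (by ring)
  have h := is_const_of_deriv_eq_zero (fun t => (hs t).differentiableAt) (fun t => (hs t).deriv)
    θ 0
  have h1 : (1 : ℂ) - lam ≠ 0 := by simpa using one_sub_ofReal_mul_ne_zero hlam (z := 1) (by simp)
  have h0 : blaschkePhase lam 0 = 0 := integral_same
  simp only [h0, Complex.ofReal_zero, neg_zero, zero_mul, Complex.exp_zero, mul_one, div_self h1]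
    at h
  calc cexp (blaschkePhase lam θ * I)
      = cexp (blaschkePhase lam θ * I) * (cexp (-(blaschkePhase lam θ : ℂ) * I) *
          ((cexp (θ * I) - lam) / (1 - lam * cexp (θ * I)))) := by rw [h, mul_one]
    _ = (cexp (θ * I) - lam) / (1 - lam * cexp (θ * I)) := by
        rw [← mul_assoc, ← Complex.exp_add]; simp

end BlaschkePhase

theorem coeff_eq_integral_sin_mul_exp {lam : ℝ} (hlam : |lam| < 1) {a : ℕ → ℂ} (n : ℕ)
    (hsum : ∀ z : ℂ, ‖z‖ < 1 →
      HasSum (fun k => a k * z ^ k) ((1 - z ^ 2) * ((z - lam) / (1 - lam * z)) ^ n)) (k : ℕ) :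
    a k = -(I / π) *
      ∫ θ in -π..π, (sin θ : ℂ) * cexp ((n * blaschkePhase lam θ + (1 - k) * θ : ℝ) * I) := by
  have hF : DifferentiableOn ℂ (fun z : ℂ => (1 - z ^ 2) * ((z - lam) / (1 - lam * z)) ^ n)
      (Metric.closedBall 0 1) := by
    fun_prop (disch := exact fun z hz =>
      one_sub_ofReal_mul_ne_zero hlam (mem_closedBall_zero_iff.1 hz))
  rw [coeff_eq_integral_of_hasSum hF hsum k, ← intervalIntegral.integral_const_mul,
    ← intervalIntegral.integral_const_mul]
  refine integral_congr fun θ _ => ?_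
  have hsq : 1 - cexp (θ * I) ^ 2 = -2 * I * sin θ * cexp (θ * I) := by
    rw [Complex.exp_mul_I, Complex.ofReal_sin]
    linear_combination -Complex.sin_sq_add_cos_sq (θ : ℂ) + Complex.sin θ ^ 2 * Complex.I_sq
  have hexp : cexp ((n * blaschkePhase lam θ + (1 - k) * θ : ℝ) * I) =
      cexp (θ * I) * cexp (n * (blaschkePhase lam θ * I)) * cexp (-(k * θ) * I) := by
    rw [← Complex.exp_add, ← Complex.exp_add]
    push_cast
    ring_nf
  rw [hsq, ← exp_blaschkePhase_mul_I hlam θ, ← Complex.exp_nat_mul, hexp]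
  have : (π : ℂ) ≠ 0 := Complex.ofReal_ne_zero.2 pi_pos.ne'
  push_cast
  field_simp

theorem norm_integral_sin_mul_exp_blaschkePhase_le {lam n : ℝ} (hlam0 : 0 < lam)
    (hlam1 : lam < 1) (hn : 0 < n) (m : ℝ) :
    ‖∫ θ in 0..π, (sin θ : ℂ) * cexp ((n * blaschkePhase lam θ + m * θ : ℝ) * I)‖ ≤
      (10 + 2 * π) / √(n * (2 * lam * (1 - lam ^ 2) / (1 + lam) ^ 4)) := by
  have hlam : |lam| < 1 := abs_lt.2 ⟨by linarith, hlam1⟩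
  have hw := contDiff_circlePoissonKernel hlam
  refine norm_integral_zero_pi_sin_mul_exp_le
    (Ψ' := fun θ => n * circlePoissonKernel lam θ + m)
    (Ψ'' := fun θ => n * deriv (circlePoissonKernel lam) θ) (fun θ => ?_) (fun θ => ?_)
    (continuous_const.mul (hw.continuous_deriv (by norm_num))) ?_ fun θ hθ => ?_
  · exact ((hasDerivAt_blaschkePhase hlam θ).const_mul n).add
      (((hasDerivAt_id θ).const_mul m).congr_deriv (mul_one m))
  · exact (((hw.differentiable (by norm_num)) θ).hasDerivAt.const_mul n).add_const m
  · have : 0 < 1 - lam ^ 2 := by nlinarith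
    positivity
  · have := mul_le_mul_of_nonneg_left (deriv_circlePoissonKernel_le hlam0.le hlam1 hθ) hn.le
    linarith

/-- For λ ∈ (0,1) and Bⁿ(z) = ((z−λ)/(1−λz))ⁿ, there is K = K(λ) > 0 such
that every Taylor coefficient of (1 − z²)·Bⁿ at 0 is bounded in absolute value by K/√n.
The coefficients `c n k` are specified by the power-series representation on 𝔻. -/
theorem linfA_norm_one_sub_zsq_blaschke_pow_le
    (lam : ℝ) (hlam : lam ∈ Set.Ioo (0 : ℝ) 1)
    (c : ℕ → ℕ → ℂ)
    (hc : ∀ n : ℕ, 1 ≤ n → ∀ z : ℂ, ‖z‖ < 1 →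
      Summable (fun k : ℕ => c n k * z ^ k) ∧
      ∑' k : ℕ, c n k * z ^ k =
        (1 - z ^ 2) * ((z - (lam : ℂ)) / (1 - (lam : ℂ) * z)) ^ n) :
    ∃ K : ℝ, 0 < K ∧ ∀ n : ℕ, 1 ≤ n → ∀ k : ℕ, ‖c n k‖ ≤ K / Real.sqrt n := by
  obtain ⟨hlam0, hlam1⟩ := hlam
  have hlam' : |lam| < 1 := abs_lt.2 ⟨by linarith, hlam1⟩
  set κ := 2 * lam * (1 - lam ^ 2) / (1 + lam) ^ 4
  have hκ : 0 < κ := by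
    have : 0 < 1 - lam ^ 2 := by nlinarith
    positivity
  refine ⟨2 * (10 + 2 * π) / (π * √κ), by positivity, fun n hn k => ?_⟩
  have hn0 : (0 : ℝ) < n := by exact_mod_cast hn
  have hsum : ∀ z : ℂ, ‖z‖ < 1 → HasSum (fun k => c n k * z ^ k)
      ((1 - z ^ 2) * ((z - lam) / (1 - lam * z)) ^ n) := fun z hz => by
    obtain ⟨hs, ht⟩ := hc n hn z hz
    exact ht ▸ hs.hasSum
  have hφ : Continuous (blaschkePhase lam) :=
    Differentiable.continuous fun θ => (hasDerivAt_blaschkePhase hlam' θ).differentiableAt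
  have hodd : Function.Odd fun θ => n * blaschkePhase lam θ + (1 - k) * θ := fun θ => by
    simp only [blaschkePhase_odd.eq]; ring
  rw [coeff_eq_integral_sin_mul_exp hlam' n hsum k, norm_mul]
  calc _ ≤ π⁻¹ * (2 * ((10 + 2 * π) / √(n * κ))) := by
        have hI : ‖-(I / π)‖ = π⁻¹ := by simp [abs_of_pos pi_pos]
        rw [hI]
        gcongr
        exact (norm_integral_sin_mul_exp_le_two_mul_of_odd hodd (by fun_prop) π).trans
          (by gcongr; exact norm_integral_sin_mul_exp_blaschkePhase_le hlam0 hlam1 hn0 _)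
    _ = 2 * (10 + 2 * π) / (π * √κ) / √n := by
        rw [sqrt_mul hn0.le]
        field_simp
end

section
/- Let n ≥ 1, let λ_1,…,λ_n ∈ 𝔻 and let B(z) = ∏_{i=1}^n (z−λ_i)/(1−conj(λ_i)z). Let g be holomorphic on 𝔻 with absolutely summable Taylor coefficients and |g(0)| = 1, and set h = B·g. Then (∑_{k≥0} |ĥ(k)|) · (sup_{k≥0} |((1−z²)B)^∧(k)|) ≥ 1, where ĥ(k) and ((1−z²)B)^∧(k) denote the k-th Taylor coefficients at 0 of h and of (1−z²)B respectively. Consequently every function h in the Wiener algebra that is divisible by B and satisfies |h(0)| = ∏_{i=1}^n |λ_i| obeys ‖h‖_W ≥ 1/‖(1−z²)B‖_{l∞A}. -/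
/-!
On the unit circle `|B| = 1` and `conj z = z⁻¹`, so with `F = (1 - z²) B` and `h = B g`,
`h · conj F · z² = g · (z² - 1)` there. Average both sides over the circle. Expanding `h`
and `F` into their absolutely convergent Taylor series, orthogonality of the monomials
`z ^ m` turns the left side into `∑ ĥ(k) · conj (F̂(k + 2))`; by the mean value property the
right side is `-g(0)`. Hence `1 = |g(0)| ≤ (∑ |ĥ(k)|) · sup |F̂(k)|`. The coefficients of `F`
are absolutely summable because `F` is holomorphic on a disc of radius larger than `1`.
-/

open Complex Metric Set Real
open scoped ComplexConjugate

noncomputable def blaschkeFactor (a z : ℂ) : ℂ := (z - a) / (1 - conj a * z)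

noncomputable def blaschkeProduct {n : ℕ} (a : Fin n → ℂ) (z : ℂ) : ℂ :=
  ∏ i, blaschkeFactor (a i) z

theorem norm_blaschkeFactor_of_mem_sphere {a z : ℂ} (ha : ‖a‖ < 1)
    (hz : z ∈ sphere (0 : ℂ) 1) : ‖blaschkeFactor a z‖ = 1 := by
  -- Mathlib's `canonicalFactor 1 a` is the reciprocal of `blaschkeFactor a`.
  have h := norm_canonicalFactor_eval_circle_eq_one (R := 1) (by simpa using ha) hz
  rw [canonicalFactor_apply] at h
  rw [blaschkeFactor, ← inv_div, norm_inv, inv_eq_one]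
  simpa using h

section BlaschkeProduct

variable {n : ℕ} {a : Fin n → ℂ}

theorem norm_blaschkeProduct_of_mem_sphere (ha : ∀ i, ‖a i‖ < 1) {z : ℂ}
    (hz : z ∈ sphere (0 : ℂ) 1) : ‖blaschkeProduct a z‖ = 1 := by
  simp [blaschkeProduct, norm_prod, norm_blaschkeFactor_of_mem_sphere (ha _) hz]

theorem exists_one_lt_differentiableOn_blaschkeProduct (ha : ∀ i, ‖a i‖ < 1) :
    ∃ R : ℝ, 1 < R ∧ DifferentiableOn ℂ (blaschkeProduct a) (closedBall 0 R) := by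
  set U := {z : ℂ | ∀ i, 1 - conj (a i) * z ≠ 0}
  have hU : IsOpen U := by
    simp only [U, Set.ofPred_forall]
    exact isOpen_iInter_of_finite fun i => isOpen_ne_fun (by fun_prop) (by fun_prop)
  have hsub : closedBall (0 : ℂ) 1 ⊆ U := by
    intro z hz i hi
    have : ‖conj (a i) * z‖ < 1 := by
      rw [norm_mul, RCLike.norm_conj]
      exact mul_lt_one_of_nonneg_of_lt_one_left (norm_nonneg _) (ha i) (by simpa using hz)
    rw [← sub_eq_zero.mp hi] at this
    simp at this
  obtain ⟨δ, hδ, hδU⟩ := (isCompact_closedBall 0 1).exists_cthickening_subset_open hU hsub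
  refine ⟨δ + 1, by linarith, fun z hz => ?_⟩
  have hzU : z ∈ U := hδU (by rwa [cthickening_closedBall hδ.le zero_le_one])
  exact (DifferentiableAt.fun_finsetProd fun i _ =>
    ((differentiableAt_id.sub_const _).div (by fun_prop) (hzU i))).differentiableWithinAt

end BlaschkeProduct

section PowerSeries

variable {c : ℕ → ℂ}

theorem norm_mul_pow_le_of_norm_le_one (a : ℂ) {z : ℂ} (hz : ‖z‖ ≤ 1) (k : ℕ) :
    ‖a * z ^ k‖ ≤ ‖a‖ := by
  rw [norm_mul, norm_pow]
  exact mul_le_of_le_one_right (norm_nonneg a) (pow_le_one₀ (norm_nonneg z) hz)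

theorem continuousOn_tsum_mul_pow (hc : Summable (‖c ·‖)) :
    ContinuousOn (fun z => ∑' k, c k * z ^ k) (closedBall 0 1) :=
  continuousOn_tsum (fun k => by fun_prop) hc fun k z hz =>
    norm_mul_pow_le_of_norm_le_one _ (by simpa using hz) k

theorem diffContOnCl_tsum_mul_pow (hc : Summable (‖c ·‖)) :
    DiffContOnCl ℂ (fun z => ∑' k, c k * z ^ k) (ball 0 1) := by
  refine ⟨differentiableOn_tsum_of_summable_norm hc (fun k => by fun_prop) isOpen_ball
    fun k z hz => norm_mul_pow_le_of_norm_le_one _ (mem_ball_zero_iff.mp hz).le k, ?_⟩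
  rw [closure_ball _ one_ne_zero]
  exact continuousOn_tsum_mul_pow hc

theorem circleAverage_tsum_mul_pow_mul (hc : Summable (‖c ·‖)) {p : ℂ → ℂ}
    (hp : Differentiable ℂ p) :
    circleAverage (fun z => (∑' k, c k * z ^ k) * p z) 0 1 = c 0 * p 0 := by
  have hcp : DiffContOnCl ℂ (fun z => (∑' k, c k * z ^ k) * p z) (ball 0 |1|) := by
    have hc' := diffContOnCl_tsum_mul_pow hc
    rw [abs_one]
    exact ⟨hc'.differentiableOn.mul hp.differentiableOn,
      hc'.continuousOn.mul hp.continuous.continuousOn⟩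
  rw [hcp.circleAverage, tsum_eq_single 0 fun k hk => by simp [hk]]
  simp

theorem summable_norm_of_hasSum_of_differentiableOn {f : ℂ → ℂ} {R : ℝ} (hR : 1 < R)
    (hf : DifferentiableOn ℂ f (closedBall 0 R))
    (hc : ∀ z ∈ ball (0 : ℂ) 1, HasSum (fun k => c k * z ^ k) (f z)) :
    Summable (‖c ·‖) := by
  lift R to NNReal using by linarith
  have hcauchy := hf.hasFPowerSeriesOnBall (by exact_mod_cast zero_lt_one.trans hR)
  have hofScalars : HasFPowerSeriesAt f (FormalMultilinearSeries.ofScalars ℂ c) 0 := by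
    rw [hasFPowerSeriesAt_iff]
    filter_upwards [ball_mem_nhds (0 : ℂ) one_pos] with z hz
    simpa [FormalMultilinearSeries.coeff_ofScalars, mul_comm] using hc z hz
  have hradius : ((1 : NNReal) : ENNReal) < (FormalMultilinearSeries.ofScalars ℂ c).radius := by
    rw [hofScalars.eq_formalMultilinearSeries hcauchy.hasFPowerSeriesAt]
    exact lt_of_lt_of_le (by exact_mod_cast hR) hcauchy.r_le
  simpa [FormalMultilinearSeries.ofScalars_norm] using
    (FormalMultilinearSeries.ofScalars ℂ c).summable_norm_mul_pow hradius

end PowerSeries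

theorem circleAverage_zpow (m : ℤ) :
    circleAverage (fun z : ℂ => z ^ m) 0 1 = if m = 0 then 1 else 0 := by
  split_ifs with hm
  · simp [hm, circleAverage_const]
  · rw [circleAverage_eq_circleIntegral one_ne_zero,
      circleIntegral.integral_congr zero_le_one (g := fun z => (z - 0) ^ (m - 1)),
      circleIntegral.integral_sub_zpow_of_ne (by omega), smul_zero]
    intro z hz
    have hz0 : z ≠ 0 := by rintro rfl; simp at hz
    simp [zpow_sub_one₀ hz0, mul_comm]

theorem circleAverage_tsum_mul_zpow {ι : Type*} [Countable ι] (a : ι → ℂ) (e : ι → ℤ)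
    (ha : Summable (‖a ·‖)) :
    circleAverage (fun z => ∑' i, a i * z ^ e i) 0 1 = ∑' i, if e i = 0 then a i else 0 := by
  have hnorm (i : ι) (θ : ℝ) : ‖a i * circleMap 0 1 θ ^ e i‖ = ‖a i‖ := by
    simp [norm_zpow]
  have hsum : HasSum (fun i => circleAverage (fun z => a i * z ^ e i) 0 1)
      (circleAverage (fun z => ∑' i, a i * z ^ e i) 0 1) := by
    simp only [circleAverage_def]
    refine (intervalIntegral.hasSum_integral_of_dominated_convergence (fun i _ => ‖a i‖)
      (fun i => (continuous_const.mul ((continuous_circleMap 0 1).zpow₀ _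
        fun _ => .inl (circleMap_ne_center one_ne_zero))).aestronglyMeasurable)
      (fun i => .of_forall fun θ _ => (hnorm i θ).le)
      (.of_forall fun _ _ => ha) intervalIntegrable_const
      (.of_forall fun θ _ => (ha.congr fun i => (hnorm i θ).symm).of_norm.hasSum)).const_smul _
  rw [← hsum.tsum_eq]
  refine tsum_congr fun i => ?_
  simpa [circleAverage_zpow] using
    circleAverage_fun_smul (a := a i) (f := fun z : ℂ => z ^ e i) (c := 0) (R := 1)

theorem circleAverage_tsum_mul_conj_tsum_mul_pow {a b : ℕ → ℂ} (ha : Summable (‖a ·‖))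
    (hb : Summable (‖b ·‖)) (m : ℕ) :
    circleAverage (fun z => (∑' k, a k * z ^ k) * conj (∑' k, b k * z ^ k) * z ^ m) 0 1 =
      ∑' k, a k * conj (b (k + m)) := by
  have hprod : Summable fun p : ℕ × ℕ => ‖a p.1 * conj (b p.2)‖ :=
    ha.mul_norm (g := fun k => conj (b k)) (hb.congr fun k => (RCLike.norm_conj _).symm)
  rw [circleAverage_congr_sphere
    (f₂ := fun z => ∑' p : ℕ × ℕ, a p.1 * conj (b p.2) * z ^ ((p.1 : ℤ) + m - p.2)),
    circleAverage_tsum_mul_zpow _ _ hprod]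
  · rw [← (Function.Injective.tsum_eq (g := fun k => (k, k + m)) ?_ ?_)]
    · simp
    · intro k l hkl
      simpa using hkl
    · rintro ⟨k, l⟩ hkl
      simp only [Function.mem_support, ne_eq, ite_eq_right_iff, not_forall] at hkl
      obtain ⟨hkl, -⟩ := hkl
      exact ⟨k, by simp only [Prod.mk.injEq, true_and]; omega⟩
  · intro z hz
    have hz1 : ‖z‖ = 1 := by simpa using hz
    have hz0 : z ≠ 0 := by rintro rfl; simp at hz1
    have hsa : Summable fun k => ‖a k * z ^ k‖ := ha.congr fun k => by simp [hz1]
    have hsb : Summable fun k => ‖conj (b k * z ^ k)‖ := hb.congr fun k => by simp [hz1]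
    simp only [conj_tsum]
    rw [tsum_mul_tsum_of_summable_norm hsa hsb, ← tsum_mul_right]
    refine tsum_congr fun p => ?_
    rw [map_mul, map_pow, ← inv_eq_conj hz1, zpow_sub₀ hz0, zpow_add₀ hz0]
    simp only [zpow_natCast, inv_pow]
    field_simp

theorem mul_mul_conj_one_sub_sq_mul_mul_sq {b g z : ℂ} (hb : ‖b‖ = 1) (hz : ‖z‖ = 1) :
    b * g * conj ((1 - z ^ 2) * b) * z ^ 2 = g * (z ^ 2 - 1) := by
  have hb' : b * conj b = 1 := by simp [mul_conj', hb]
  have hz' : z * conj z = 1 := by simp [mul_conj', hz]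
  simp only [map_mul, map_sub, map_one, map_pow]
  linear_combination (g * (1 - conj z ^ 2) * z ^ 2) * hb' - g * (z * conj z + 1) * hz'

theorem tsum_mul_conj_add_two_eq_neg_of_eq_blaschkeProduct {n : ℕ} {lam : Fin n → ℂ}
    (hlam : ∀ i, ‖lam i‖ < 1) {g h b : ℕ → ℂ} (hg : Summable (‖g ·‖))
    (hh : Summable (‖h ·‖)) (hb : Summable (‖b ·‖))
    (hh_eq : EqOn (fun z => ∑' k, h k * z ^ k)
      (fun z => blaschkeProduct lam z * ∑' k, g k * z ^ k) (ball 0 1))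
    (hb_eq : EqOn (fun z => ∑' k, b k * z ^ k) (fun z => (1 - z ^ 2) * blaschkeProduct lam z)
      (ball 0 1)) :
    ∑' k, h k * conj (b (k + 2)) = -g 0 := by
  obtain ⟨R, hR, hB⟩ := exists_one_lt_differentiableOn_blaschkeProduct hlam
  have hB_cont : ContinuousOn (blaschkeProduct lam) (closedBall 0 1) :=
    hB.continuousOn.mono (closedBall_subset_closedBall hR.le)
  have hclosure : closedBall (0 : ℂ) 1 ⊆ closure (ball 0 1) := (closure_ball 0 one_ne_zero).ge
  have hh_eq' := hh_eq.of_subset_closure (continuousOn_tsum_mul_pow hh)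
    (hB_cont.mul (continuousOn_tsum_mul_pow hg)) ball_subset_closedBall hclosure
  have hb_eq' := hb_eq.of_subset_closure (continuousOn_tsum_mul_pow hb) (by fun_prop)
    ball_subset_closedBall hclosure
  rw [← circleAverage_tsum_mul_conj_tsum_mul_pow hh hb 2]
  calc _ = circleAverage (fun z => (∑' k, g k * z ^ k) * (z ^ 2 - 1)) 0 1 :=
        circleAverage_congr_sphere fun z hz => by
          rw [abs_one] at hz
          simp only [hh_eq' (sphere_subset_closedBall hz), hb_eq' (sphere_subset_closedBall hz)]
          exact mul_mul_conj_one_sub_sq_mul_mul_sq (norm_blaschkeProduct_of_mem_sphere hlam hz)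
            (by simpa using hz)
    _ = -g 0 := by
        rw [circleAverage_tsum_mul_pow_mul hg (by fun_prop)]
        simp

theorem norm_tsum_mul_le_of_norm_le {ι R : Type*} [NormedRing R] {a b : ι → R} {M : ℝ}
    (ha : Summable (‖a ·‖)) (hb : ∀ i, ‖b i‖ ≤ M) :
    ‖∑' i, a i * b i‖ ≤ (∑' i, ‖a i‖) * M := by
  have hle (i : ι) : ‖a i * b i‖ ≤ ‖a i‖ * M :=
    (norm_mul_le _ _).trans (mul_le_mul_of_nonneg_left (hb i) (norm_nonneg _))
  have hab : Summable fun i => ‖a i * b i‖ :=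
    .of_nonneg_of_le (fun i => norm_nonneg _) hle (ha.mul_right M)
  calc ‖∑' i, a i * b i‖ ≤ ∑' i, ‖a i * b i‖ := norm_tsum_le_tsum_norm hab
    _ ≤ ∑' i, ‖a i‖ * M := hab.tsum_le_tsum hle (ha.mul_right M)
    _ = (∑' i, ‖a i‖) * M := tsum_mul_right

theorem wiener_norm_mul_linfA_ge_one_general
    (n : ℕ) (lam : Fin n → ℂ) (hlam : ∀ i, ‖lam i‖ < 1)
    (gc hc bc : ℕ → ℂ)
    (hg_sum : Summable fun k : ℕ => ‖gc k‖)
    (hh_sum : Summable fun k : ℕ => ‖hc k‖)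
    (hg0 : ‖gc 0‖ = 1)
    (hhrep : ∀ z : ℂ, ‖z‖ < 1 →
      ∑' k : ℕ, hc k * z ^ k =
        (∏ i : Fin n, (z - lam i) / (1 - (starRingEnd ℂ) (lam i) * z)) *
          ∑' k : ℕ, gc k * z ^ k)
    (hbrep : ∀ z : ℂ, ‖z‖ < 1 →
      Summable (fun k : ℕ => bc k * z ^ k) ∧
      ∑' k : ℕ, bc k * z ^ k =
        (1 - z ^ 2) * ∏ i : Fin n, (z - lam i) / (1 - (starRingEnd ℂ) (lam i) * z)) :
    1 ≤ (∑' k : ℕ, ‖hc k‖) * ⨆ k : ℕ, ‖bc k‖ := by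
  change ∀ z : ℂ, ‖z‖ < 1 → _ = blaschkeProduct lam z * _ at hhrep
  change ∀ z : ℂ, ‖z‖ < 1 → _ ∧ _ = (1 - z ^ 2) * blaschkeProduct lam z at hbrep
  have hb_sum : Summable (‖bc ·‖) := by
    obtain ⟨R, hR, hB⟩ := exists_one_lt_differentiableOn_blaschkeProduct hlam
    refine summable_norm_of_hasSum_of_differentiableOn
      (f := fun z => (1 - z ^ 2) * blaschkeProduct lam z) hR (by fun_prop) fun z hz => ?_
    obtain ⟨hsum, heq⟩ := hbrep z (mem_ball_zero_iff.mp hz)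
    exact heq ▸ hsum.hasSum
  have hpairing := tsum_mul_conj_add_two_eq_neg_of_eq_blaschkeProduct hlam hg_sum hh_sum hb_sum
    (fun z hz => hhrep z (mem_ball_zero_iff.mp hz))
    (fun z hz => (hbrep z (mem_ball_zero_iff.mp hz)).2)
  have hbc_le (k : ℕ) : ‖conj (bc (k + 2))‖ ≤ ⨆ k, ‖bc k‖ := by
    rw [RCLike.norm_conj]
    exact le_ciSup hb_sum.tendsto_atTop_zero.bddAbove_range (k + 2)
  calc 1 = ‖∑' k, hc k * conj (bc (k + 2))‖ := by rw [hpairing, norm_neg, hg0]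
    _ ≤ _ := norm_tsum_mul_le_of_norm_le hh_sum hbc_le

/-- If `B` is the finite Blaschke product with zeros λ₁,…,λₙ ∈ 𝔻, `g` is in the
Wiener algebra with |g(0)| = 1, and `h = B·g`, then
(∑_{k≥0} |ĥ(k)|) · (sup_{k≥0} |((1−z²)B)^∧(k)|) ≥ 1.
Here `hc`, `gc`, `bc` are the Taylor coefficient sequences of h, g and (1−z²)B, specified by
their power-series representations on 𝔻. -/
theorem wiener_norm_mul_linfA_ge_one
    (n : ℕ) (hn : 1 ≤ n) (lam : Fin n → ℂ) (hlam : ∀ i, ‖lam i‖ < 1)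
    (gc hc bc : ℕ → ℂ)
    (hg_sum : Summable fun k : ℕ => ‖gc k‖)
    (hh_sum : Summable fun k : ℕ => ‖hc k‖)
    (hg0 : ‖gc 0‖ = 1)
    (hhrep : ∀ z : ℂ, ‖z‖ < 1 →
      ∑' k : ℕ, hc k * z ^ k =
        (∏ i : Fin n, (z - lam i) / (1 - (starRingEnd ℂ) (lam i) * z)) *
          ∑' k : ℕ, gc k * z ^ k)
    (hbrep : ∀ z : ℂ, ‖z‖ < 1 →
      Summable (fun k : ℕ => bc k * z ^ k) ∧
      ∑' k : ℕ, bc k * z ^ k =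
        (1 - z ^ 2) * ∏ i : Fin n, (z - lam i) / (1 - (starRingEnd ℂ) (lam i) * z)) :
    1 ≤ (∑' k : ℕ, ‖hc k‖) * ⨆ k : ℕ, ‖bc k‖ :=
  wiener_norm_mul_linfA_ge_one_general n lam hlam gc hc bc hg_sum hh_sum hg0 hhrep hbrep
end

section
/- Let T be an n×n complex matrix that is power bounded by C with minimal polynomial m(z) = ∏_{i=1}^d (z−λ_i), and suppose |λ_i| = 1 for all i = 1,…,d. Then for every ζ ∈ ℂ that is not a root of m, the matrix ζI − T is invertible and ‖(ζI − T)⁻¹‖ ≤ C·√d / min_{1≤i≤d} |ζ − λ_i|. -/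
/-!
Power boundedness rules out Jordan chains at unimodular eigenvalues: if `T v = λ v + w` and
`T w = λ w` with `|λ| = 1`, then `Tⁿ⁺¹ v = λⁿ⁺¹ v + (n + 1) λⁿ w`, which is unbounded unless
`w = 0`. Hence the roots `λᵢ` of the minimal polynomial are distinct, `T = ∑ λᵢ Pᵢ` with the
spectral projections `Pᵢ = ℓᵢ(T)` given by the Lagrange basis at the nodes `λᵢ`, and the
resolvent is `∑ (ζ - λᵢ)⁻¹ Pᵢ`.

For any coefficients `c`, orthogonality of the characters `j ↦ λᵢʲ` in Cesàro mean shows that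
`∑ cᵢ Pᵢ` is the limit of `N⁻¹ ∑_{j<N} gⱼ Tʲ` with `gⱼ = ∑ cᵢ conj(λᵢ)ʲ`. By Cauchy–Schwarz these
means have norm at most `C` times the quadratic mean of `g`, which tends to `‖c‖₂`. Taking
`cᵢ = (ζ - λᵢ)⁻¹` gives `‖(ζ - T)⁻¹‖ ≤ C ‖c‖₂ ≤ C √d / minᵢ |ζ - λᵢ|`.
-/

open Polynomial Finset Filter Topology ComplexConjugate

section Interpolation

variable {K A ι : Type*} [Field K] [Ring A] [Algebra K A] [Fintype ι] {x : A} {lam : ι → K}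

theorem aeval_eq_of_eval_eq (hlam : Function.Injective lam)
    (hx : aeval x (∏ i, (X - C (lam i))) = 0) {p q : K[X]}
    (hpq : ∀ i, p.eval (lam i) = q.eval (lam i)) : aeval x p = aeval x q := by
  obtain ⟨r, hr⟩ : ∏ i, (X - C (lam i)) ∣ p - q :=
    Finset.prod_dvd_of_coprime ((pairwise_coprime_X_sub_C hlam).set_pairwise _)
      (fun i _ => dvd_iff_isRoot.mpr (by simp [hpq i]))
  rw [← sub_eq_zero, ← map_sub, hr, map_mul, hx, zero_mul]

theorem injective_of_forall_not_sq_dvd_prod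
    (h : ∀ i, ¬ (X - C (lam i)) ^ 2 ∣ ∏ i, (X - C (lam i))) :
    Function.Injective lam := by
  classical
  intro i k hik
  by_contra hne
  refine h i (dvd_trans ?_ (prod_dvd_prod_of_subset {i, k} univ _ (subset_univ _)))
  rw [prod_pair hne, hik, sq]

variable [DecidableEq ι]

variable (x lam) in
noncomputable def spectralProjection (i : ι) : A :=
  aeval x (Lagrange.basis univ lam i)

theorem sum_smul_spectralProjection (r : ι → K) :
    ∑ i, r i • spectralProjection x lam i = aeval x (Lagrange.interpolate univ lam r) := by
  simp [spectralProjection, Lagrange.interpolate_apply, Algebra.smul_def]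

theorem aeval_eq_sum_eval_smul_spectralProjection (hlam : Function.Injective lam)
    (hx : aeval x (∏ i, (X - C (lam i))) = 0) (p : K[X]) :
    aeval x p = ∑ i, p.eval (lam i) • spectralProjection x lam i := by
  rw [sum_smul_spectralProjection]
  exact aeval_eq_of_eval_eq hlam hx fun i =>
    (Lagrange.eval_interpolate_at_node (fun i => p.eval (lam i)) hlam.injOn (mem_univ i)).symm

theorem pow_eq_sum_pow_smul_spectralProjection (hlam : Function.Injective lam)
    (hx : aeval x (∏ i, (X - C (lam i))) = 0) (j : ℕ) :
    x ^ j = ∑ i, lam i ^ j • spectralProjection x lam i := by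
  simpa using aeval_eq_sum_eval_smul_spectralProjection hlam hx (X ^ j)

theorem aeval_mul_sum_inv_eval_smul_spectralProjection (hlam : Function.Injective lam)
    (hx : aeval x (∏ i, (X - C (lam i))) = 0) {p : K[X]} (hp : ∀ i, p.eval (lam i) ≠ 0) :
    aeval x p * ∑ i, (p.eval (lam i))⁻¹ • spectralProjection x lam i = 1 := by
  rw [sum_smul_spectralProjection, ← map_mul, ← map_one (aeval (R := K) x)]
  refine aeval_eq_of_eval_eq hlam hx fun i => ?_
  rw [eval_mul, Lagrange.eval_interpolate_at_node _ hlam.injOn (mem_univ i), eval_one,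
    mul_inv_cancel₀ (hp i)]

theorem sum_inv_eval_smul_spectralProjection_mul_aeval (hlam : Function.Injective lam)
    (hx : aeval x (∏ i, (X - C (lam i))) = 0) {p : K[X]} (hp : ∀ i, p.eval (lam i) ≠ 0) :
    (∑ i, (p.eval (lam i))⁻¹ • spectralProjection x lam i) * aeval x p = 1 := by
  rw [← aeval_mul_sum_inv_eval_smul_spectralProjection hlam hx hp, sum_smul_spectralProjection,
    ← map_mul, ← map_mul, mul_comm]

end Interpolation

section PowerBounded

variable {A : Type*} [NormedRing A] [NormedAlgebra ℂ A] {x : A} {M : ℝ}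

theorem sub_algebraMap_mul_eq_zero_of_norm_pow_le (hx : ∀ j : ℕ, ‖x ^ j‖ ≤ M) {a : ℂ}
    (ha : ‖a‖ = 1) {y : A} (hy : (x - algebraMap ℂ A a) ^ 2 * y = 0) :
    (x - algebraMap ℂ A a) * y = 0 := by
  set w := (x - algebraMap ℂ A a) * y
  have hxw : x * w = a • w := by
    rw [← sub_eq_zero, ← hy, sq, mul_assoc, sub_mul _ _ w, Algebra.algebraMap_eq_smul_one,
      smul_one_mul]
  have hxy : x * y = a • y + w := by
    simp [w, sub_mul, Algebra.algebraMap_eq_smul_one]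
  clear_value w
  have hpow : ∀ n : ℕ, x ^ (n + 1) * y = a ^ (n + 1) • y + ((n + 1) * a ^ n) • w := by
    intro n
    induction n with
    | zero => simp [hxy]
    | succ n ih =>
      rw [pow_succ', mul_assoc, ih, mul_add, mul_smul_comm, mul_smul_comm, hxy, hxw]
      push_cast
      module
  have hbound : ∀ n : ℕ, ‖w‖ ≤ (M + 1) * ‖y‖ / ((n + 1 : ℕ) : ℝ) := by
    intro n
    rw [le_div_iff₀' (by positivity)]
    calc ((n + 1 : ℕ) : ℝ) * ‖w‖ = ‖((n + 1) * a ^ n) • w‖ := by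
          rw [norm_smul, norm_mul, norm_pow, ha, one_pow, mul_one]
          norm_cast
      _ = ‖x ^ (n + 1) * y - a ^ (n + 1) • y‖ := by rw [hpow, add_sub_cancel_left]
      _ ≤ ‖x ^ (n + 1)‖ * ‖y‖ + ‖y‖ := by
          refine (norm_sub_le _ _).trans (add_le_add (norm_mul_le _ _) ?_)
          rw [norm_smul, norm_pow, ha, one_pow, one_mul]
      _ ≤ (M + 1) * ‖y‖ := by nlinarith [hx (n + 1), norm_nonneg y]
  have hlim : Tendsto (fun n : ℕ => (M + 1) * ‖y‖ / ((n + 1 : ℕ) : ℝ)) atTop (𝓝 0) :=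
    (tendsto_add_atTop_iff_nat 1).mpr (tendsto_const_div_atTop_nhds_zero_nat _)
  exact norm_le_zero_iff.mp (ge_of_tendsto' hlim hbound)

theorem not_sq_dvd_minpoly_of_norm_pow_le (hx : ∀ j : ℕ, ‖x ^ j‖ ≤ M) (hint : IsIntegral ℂ x)
    {a : ℂ} (ha : ‖a‖ = 1) : ¬ (X - C a) ^ 2 ∣ minpoly ℂ x := by
  rintro ⟨f, hf⟩
  have hf0 : f ≠ 0 := by rintro rfl; exact minpoly.ne_zero hint (by simpa using hf)
  have hroot : aeval x ((X - C a) * f) = 0 := by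
    rw [map_mul, map_sub, aeval_X, aeval_C]
    refine sub_algebraMap_mul_eq_zero_of_norm_pow_le hx ha ?_
    simpa [hf, mul_pow] using minpoly.aeval ℂ x
  have := natDegree_le_of_dvd (minpoly.dvd ℂ x hroot) (mul_ne_zero (X_sub_C_ne_zero a) hf0)
  rw [hf, natDegree_mul (pow_ne_zero 2 (X_sub_C_ne_zero a)) hf0,
    natDegree_mul (X_sub_C_ne_zero a) hf0, natDegree_pow, natDegree_X_sub_C] at this
  omega

end PowerBounded

theorem tendsto_cesaro_pow {ν : ℂ} (hν : ‖ν‖ ≤ 1) :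
    Tendsto (fun N : ℕ => (N : ℂ)⁻¹ * ∑ j ∈ range N, ν ^ j) atTop
      (𝓝 (if ν = 1 then 1 else 0)) := by
  split_ifs with h1
  · subst h1
    refine tendsto_const_nhds.congr' ?_
    filter_upwards [eventually_ne_atTop 0] with N hN
    simp [hN]
  · have hν1 : 0 < ‖ν - 1‖ := norm_pos_iff.mpr (sub_ne_zero.mpr h1)
    refine squeeze_zero_norm (fun N => ?_) (tendsto_const_div_atTop_nhds_zero_nat (2 / ‖ν - 1‖))
    have hgeom : ‖∑ j ∈ range N, ν ^ j‖ ≤ 2 / ‖ν - 1‖ := by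
      rw [geom_sum_eq h1, norm_div]
      gcongr
      calc ‖ν ^ N - 1‖ ≤ ‖ν‖ ^ N + 1 := by simpa using norm_sub_le (ν ^ N) 1
        _ ≤ 2 := by nlinarith [pow_le_one₀ (norm_nonneg ν) hν (n := N)]
    rw [norm_mul, norm_inv, Complex.norm_natCast, inv_mul_eq_div]
    gcongr

theorem conj_mul_eq_one_iff {a b : ℂ} (ha : ‖a‖ = 1) : conj a * b = 1 ↔ b = a := by
  have hconj : conj a * a = 1 := by rw [Complex.conj_mul', ha]; norm_num
  rw [← hconj, mul_right_inj' (left_ne_zero_of_mul_eq_one hconj)]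

section Cesaro

variable {ι : Type*} [Fintype ι] {lam : ι → ℂ}

theorem tendsto_cesaro_sum_sum_conj_mul_pow_smul {W : Type*} [AddCommMonoid W] [Module ℂ W]
    [TopologicalSpace W] [ContinuousAdd W] [ContinuousSMul ℂ W]
    (hlam : Function.Injective lam) (hone : ∀ i, ‖lam i‖ = 1) (f : ι → ι → W) :
    Tendsto (fun N : ℕ =>
      (N : ℂ)⁻¹ • ∑ j ∈ range N, ∑ i, ∑ k, (conj (lam i) * lam k) ^ j • f i k) atTop
      (𝓝 (∑ i, f i i)) := by
  classical
  have hdiag : ∑ i, f i i =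
      ∑ i, ∑ k, (if conj (lam i) * lam k = 1 then 1 else 0 : ℂ) • f i k := by
    simp [conj_mul_eq_one_iff (hone _), hlam.eq_iff, ite_smul]
  have hswap (N : ℕ) : (N : ℂ)⁻¹ • ∑ j ∈ range N, ∑ i, ∑ k, (conj (lam i) * lam k) ^ j • f i k =
      ∑ i, ∑ k, ((N : ℂ)⁻¹ * ∑ j ∈ range N, (conj (lam i) * lam k) ^ j) • f i k := by
    simp only [mul_smul, sum_smul, smul_sum]
    rw [sum_comm]
    exact sum_congr rfl fun i _ => sum_comm
  simp_rw [hdiag, hswap]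
  refine tendsto_finsetSum _ fun i _ => tendsto_finsetSum _ fun k _ =>
    (tendsto_cesaro_pow ?_).smul_const _
  simp [hone]

theorem norm_inv_smul_sum_smul_le {V : Type*} [NormedAddCommGroup V] [NormedSpace ℂ V]
    {v : ℕ → V} {M : ℝ} (hM : 0 ≤ M) (hv : ∀ j, ‖v j‖ ≤ M) (a : ℕ → ℂ) (N : ℕ) :
    ‖(N : ℂ)⁻¹ • ∑ j ∈ range N, a j • v j‖ ≤ M * √((∑ j ∈ range N, ‖a j‖ ^ 2) / N) := by
  calc ‖(N : ℂ)⁻¹ • ∑ j ∈ range N, a j • v j‖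
      ≤ (N : ℝ)⁻¹ * ∑ j ∈ range N, ‖a j‖ * M := by
        rw [norm_smul, norm_inv, Complex.norm_natCast]
        gcongr
        refine (norm_sum_le _ _).trans (sum_le_sum fun j _ => ?_)
        rw [norm_smul]
        gcongr
        exact hv j
    _ = M * ((∑ j ∈ range N, ‖a j‖) / #(range N)) := by
        rw [card_range, ← sum_mul]; ring
    _ ≤ M * √((∑ j ∈ range N, ‖a j‖ ^ 2) / #(range N)) := by
        gcongr
        exact (le_abs_self _).trans (Real.abs_le_sqrt sum_div_card_sq_le_sum_sq_div_card)
    _ = M * √((∑ j ∈ range N, ‖a j‖ ^ 2) / N) := by rw [card_range]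

theorem norm_sum_smul_le_of_norm_sum_pow_smul_le {V : Type*} [NormedAddCommGroup V]
    [NormedSpace ℂ V] {P : ι → V} {M : ℝ} (hlam : Function.Injective lam)
    (hone : ∀ i, ‖lam i‖ = 1) (hP : ∀ j : ℕ, ‖∑ i, lam i ^ j • P i‖ ≤ M) (c : ι → ℂ) :
    ‖∑ i, c i • P i‖ ≤ M * √(∑ i, ‖c i‖ ^ 2) := by
  set g : ℕ → ℂ := fun j => ∑ i, c i * conj (lam i) ^ j
  have hmean : Tendsto (fun N : ℕ => (N : ℂ)⁻¹ • ∑ j ∈ range N, g j • ∑ k, lam k ^ j • P k)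
      atTop (𝓝 (∑ i, c i • P i)) := by
    convert tendsto_cesaro_sum_sum_conj_mul_pow_smul hlam hone (fun i k => c i • P k) using 5
      with N j
    simp only [g, sum_mul, sum_smul, smul_sum, smul_smul, mul_pow]
    rw [sum_comm]
    exact sum_congr rfl fun i _ => sum_congr rfl fun k _ => by ring_nf
  have hsq : Tendsto (fun N : ℕ => (∑ j ∈ range N, ‖g j‖ ^ 2) / N) atTop
      (𝓝 (∑ i, ‖c i‖ ^ 2)) := by
    have := (Complex.continuous_re.tendsto _).comp
      (tendsto_cesaro_sum_sum_conj_mul_pow_smul hlam hone (fun i k => c i * conj (c k)))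
    have hnorm_sq (j : ℕ) : ∑ i, ∑ k, (conj (lam i) * lam k) ^ j • (c i * conj (c k)) =
        ((‖g j‖ ^ 2 : ℝ) : ℂ) := by
      rw [Complex.ofReal_pow, ← Complex.mul_conj', map_sum, sum_mul_sum]
      refine sum_congr rfl fun i _ => sum_congr rfl fun k _ => ?_
      simp only [map_mul, map_pow, Complex.conj_conj, smul_eq_mul]
      ring
    convert this using 2 with N
    · simp only [Function.comp_apply, hnorm_sq]
      rw [← Complex.ofReal_sum, smul_eq_mul, ← Complex.ofReal_natCast, ← Complex.ofReal_inv,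
        ← Complex.ofReal_mul, Complex.ofReal_re, div_eq_inv_mul]
    · simp [Complex.mul_conj', ← Complex.ofReal_pow]
  exact le_of_tendsto_of_tendsto' hmean.norm (hsq.sqrt.const_mul M)
    (norm_inv_smul_sum_smul_le ((norm_nonneg _).trans (hP 0)) hP g)

end Cesaro

theorem sqrt_sum_inv_sq_le_sqrt_card_div_inf' {ι : Type*} [Fintype ι]
    (hι : (univ : Finset ι).Nonempty) {f : ι → ℝ} (hf : ∀ i, 0 < f i) :
    √(∑ i, (f i)⁻¹ ^ 2) ≤ √(Fintype.card ι) / univ.inf' hι f := by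
  have hδ : 0 < univ.inf' hι f := (lt_inf'_iff hι).mpr fun i _ => hf i
  calc √(∑ i, (f i)⁻¹ ^ 2) ≤ √(∑ _i : ι, (univ.inf' hι f)⁻¹ ^ 2) := by
        gcongr with i
        · exact inv_nonneg.mpr (hf i).le
        · exact inf'_le _ (mem_univ i)
    _ = √(Fintype.card ι) / univ.inf' hι f := by
        rw [sum_const, card_univ, nsmul_eq_mul, Real.sqrt_mul (by positivity),
          Real.sqrt_sq (by positivity), div_eq_mul_inv]

theorem resolvent_bound_unimodular_spectrum_general
    {E : Type*} [NormedAddCommGroup E] [NormedSpace ℂ E]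
    (T : E →L[ℂ] E) (C : ℝ) (hpb : ∀ j : ℕ, ‖T ^ j‖ ≤ C)
    (d : ℕ) (hd : 0 < d) (lam : Fin d → ℂ)
    (hmin : minpoly ℂ T = ∏ i : Fin d, (Polynomial.X - Polynomial.C (lam i)))
    (hone : ∀ i, ‖lam i‖ = 1)
    (ζ : ℂ) (hζ : ∀ i, ζ ≠ lam i) :
    ∃ S : E →L[ℂ] E, (ζ • 1 - T) * S = 1 ∧ S * (ζ • 1 - T) = 1 ∧
      ‖S‖ ≤ C * Real.sqrt d /
        Finset.inf' Finset.univ (Finset.univ_nonempty_iff.mpr ⟨⟨0, hd⟩⟩)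
          (fun i => ‖ζ - lam i‖) := by
  have hroot : aeval T (∏ i, (X - Polynomial.C (lam i)) : ℂ[X]) = 0 := hmin ▸ minpoly.aeval ℂ T
  have hint : IsIntegral ℂ T := ⟨_, monic_prod_of_monic _ _ fun i _ => monic_X_sub_C _, hroot⟩
  have hlam : Function.Injective lam := injective_of_forall_not_sq_dvd_prod fun i hdvd =>
    not_sq_dvd_minpoly_of_norm_pow_le hpb hint (hone i) (hmin ▸ hdvd)
  have hζT : ζ • 1 - T = aeval T (Polynomial.C ζ - X) := by
    simp [Algebra.algebraMap_eq_smul_one]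
  have heval : ∀ i, (Polynomial.C ζ - X).eval (lam i) ≠ 0 := by simpa [sub_eq_zero] using hζ
  refine ⟨∑ i, (ζ - lam i)⁻¹ • spectralProjection T lam i, ?_, ?_, ?_⟩
  · simpa [hζT] using aeval_mul_sum_inv_eval_smul_spectralProjection hlam hroot heval
  · simpa [hζT] using sum_inv_eval_smul_spectralProjection_mul_aeval hlam hroot heval
  calc _ ≤ C * √(∑ i, ‖(ζ - lam i)⁻¹‖ ^ 2) :=
        norm_sum_smul_le_of_norm_sum_pow_smul_le hlam hone
          (fun j => pow_eq_sum_pow_smul_spectralProjection hlam hroot j ▸ hpb j) _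
    _ ≤ C * Real.sqrt d / univ.inf' _ fun i => ‖ζ - lam i‖ := by
        rw [mul_div_assoc]
        gcongr
        · exact (norm_nonneg _).trans (hpb 0)
        · simpa using sqrt_sum_inv_sq_le_sqrt_card_div_inf' _
            fun i => norm_pos_iff.mpr (sub_ne_zero.mpr (hζ i))

/-- If T is power bounded by C (with respect to the operator norm induced by an
arbitrary norm on an n-dimensional complex space), its minimal polynomial is
∏_{i=1}^d (z−λ_i) with all |λ_i| = 1, and ζ is not a root of it, then ζ·I − T is invertible
and ‖(ζI − T)⁻¹‖ ≤ C·√d / min_i |ζ − λ_i|. -/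
theorem resolvent_bound_unimodular_spectrum
    {E : Type*} [NormedAddCommGroup E] [NormedSpace ℂ E] [FiniteDimensional ℂ E]
    (n : ℕ) (hn : 1 ≤ n) (hdim : Module.finrank ℂ E = n)
    (T : E →L[ℂ] E) (C : ℝ) (hC : 1 ≤ C) (hpb : ∀ j : ℕ, ‖T ^ j‖ ≤ C)
    (d : ℕ) (hd : 0 < d) (lam : Fin d → ℂ)
    (hmin : minpoly ℂ T = ∏ i : Fin d, (Polynomial.X - Polynomial.C (lam i)))
    (hone : ∀ i, ‖lam i‖ = 1)
    (ζ : ℂ) (hζ : ∀ i, ζ ≠ lam i) :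
    ∃ S : E →L[ℂ] E, (ζ • 1 - T) * S = 1 ∧ S * (ζ • 1 - T) = 1 ∧
      ‖S‖ ≤ C * Real.sqrt d /
        Finset.inf' Finset.univ (Finset.univ_nonempty_iff.mpr ⟨⟨0, hd⟩⟩)
          (fun i => ‖ζ - lam i‖) :=
  resolvent_bound_unimodular_spectrum_general T C hpb d hd lam hmin hone ζ hζ
end

section
/- Let T be an n×n complex matrix that is power bounded by C with minimal polynomial m(z) = ∏_{i=1}^d (z−λ_i) (roots listed with multiplicity, in any fixed order). Let ζ ∈ ℂ be such that ζ ≠ λ_j and 1 − conj(λ_j)ζ ≠ 0 for every j. Then for every ρ ∈ (0,1), the matrix ζI − T is invertible and ‖(ζI − T)⁻¹‖² ≤ (C²/(1−ρ²)) · ∑_{k=1}^{d} ρ^{−(2k−2)} · (1 − ρ²|λ_k|²)/|ζ − λ_k|² · ∏_{j=1}^{k−1} | ((1 − conj(λ_j)ζ)/(ζ − λ_j)) · ( 1 + (1−ρ²)·conj(λ_j)ζ/(1 − conj(λ_j)ζ) ) |². -/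
/-!
Fix `ρ ∈ (0, 1)` and put `w = ρζ`, `μᵢ = ρλᵢ`, so that `|μᵢ| < 1`. Splitting off one Blaschke
factor `b_μ(z) = (z - μ)/(1 - μ̄z)` at a time, one builds a power series `h` with absolutely
summable coefficients such that `(w - z) h(z) - ρ` is a multiple of `∏ (z - μᵢ)`. Multiplication by
`b_μ` is an isometry of `H²` and `b_μ H²` is orthogonal to the kernel `1/(1 - μ̄z)`, so `‖h‖²_{H²}`
is `ρ²` times the sum in the statement. As `∏ (ρT - μᵢ) = ρᵈ m(T) = 0`, `h(ρT)` inverts `ζ - T`,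
and `‖h(ρT)‖ ≤ C ∑ |hₙ| ρⁿ ≤ C ‖h‖_{H²} / √(1 - ρ²)` by Cauchy–Schwarz.
-/

open Finset ComplexConjugate

theorem Fin.prod_Iio_succ {M : Type*} [CommMonoid M] {n : ℕ} (f : Fin (n + 1) → M) (k : Fin n) :
    ∏ j ∈ Iio k.succ, f j = f 0 * ∏ j ∈ Iio k, f j.succ := by
  rw [← Ico_bot, bot_eq_zero, Ico_eq_cons_Ioo (Fin.succ_pos k), Finset.prod_cons,
    ← Fin.map_succEmb_Iio, prod_map]
  rfl

theorem sq_tsum_mul_pow_le {a : ℕ → ℝ} (ha0 : ∀ n, 0 ≤ a n) (ha : Summable fun n => a n ^ 2)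
    {r : ℝ} (hr0 : 0 ≤ r) (hr1 : r < 1) :
    (∑' n, a n * r ^ n) ^ 2 ≤ (∑' n, a n ^ 2) / (1 - r ^ 2) := by
  have hr2 : 0 < 1 - r ^ 2 := by nlinarith
  have hgeo : HasSum (fun n : ℕ => (r ^ n) ^ 2) (1 - r ^ 2)⁻¹ := by
    simpa only [← pow_mul, mul_comm 2] using hasSum_geometric_of_lt_one (sq_nonneg r) (by linarith)
  have hCS := Real.inner_le_Lp_mul_Lq_tsum_of_nonneg (p := 2) (q := 2) (f := a)
    (g := fun n => r ^ n) (by rw [Real.holderConjugate_iff]; norm_num) ha0 (fun n => by positivity)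
    (by simpa only [Real.rpow_two] using ha) (by simpa only [Real.rpow_two] using hgeo.summable)
  simp only [Real.rpow_two, hgeo.tsum_eq, ← Real.sqrt_eq_rpow] at hCS
  calc (∑' n, a n * r ^ n) ^ 2 ≤ (√(∑' n, a n ^ 2) * √(1 - r ^ 2)⁻¹) ^ 2 :=
        pow_le_pow_left₀ (tsum_nonneg fun n => mul_nonneg (ha0 n) (by positivity)) hCS 2
    _ = (∑' n, a n ^ 2) / (1 - r ^ 2) := by
      rw [mul_pow, Real.sq_sqrt (tsum_nonneg fun n => sq_nonneg _),
        Real.sq_sqrt (inv_nonneg.mpr hr2.le), div_eq_mul_inv]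

theorem Polynomial.aeval_smul_prod_X_sub_C_mul {A : Type*} [Ring A] [Algebra ℂ A] (a : A) (r : ℂ)
    {d : ℕ} (lam : Fin d → ℂ) :
    aeval (r • a) (∏ i, (X - C (r * lam i))) = r ^ d • aeval a (∏ i, (X - C (lam i))) := by
  have hcomp (i : Fin d) : (X - C (r * lam i)).comp (C r * X) = C r * (X - C (lam i)) := by
    rw [sub_comp, X_comp, C_comp, map_mul, mul_sub]
  have hsmul : r • a = aeval a (C r * X) := by simp [Algebra.smul_def]
  rw [hsmul, ← aeval_comp, prod_comp, prod_congr rfl fun i _ => hcomp i]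
  simp only [prod_mul_distrib, prod_const, card_univ, Fintype.card_fin, ← map_pow, map_mul, aeval_C,
    Algebra.smul_def]

theorem ContinuousLinearMap.norm_le_one_of_isRoot_minpoly {E : Type*} [NormedAddCommGroup E]
    [NormedSpace ℂ E] [FiniteDimensional ℂ E] {T : E →L[ℂ] E} {M : ℝ} (hT : ∀ n, ‖T ^ n‖ ≤ M)
    {μ : ℂ} (hμ : (minpoly ℂ T).IsRoot μ) : ‖μ‖ ≤ 1 := by
  have hmin : minpoly ℂ (T : E →ₗ[ℂ] E) = minpoly ℂ T :=
    minpoly.algHom_eq (AlgHom.ofLinearMap (coeLM ℂ) rfl fun _ _ => rfl) coe_injective T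
  obtain ⟨v, hv⟩ := (Module.End.hasEigenvalue_of_isRoot (hmin ▸ hμ)).exists_hasEigenvector
  have hpow (n : ℕ) : ‖μ‖ ^ n ≤ M := by
    have hle := (T ^ n).le_opNorm v
    rw [← coe_coe, toLinearMap_pow, hv.pow_apply, norm_smul, norm_pow] at hle
    exact le_of_mul_le_mul_right (hle.trans (mul_le_mul_of_nonneg_right (hT n) (norm_nonneg v)))
      (norm_pos_iff.mpr hv.2)
  by_contra! h
  obtain ⟨n, hn⟩ := pow_unbounded_of_one_lt M h
  exact (hpow n).not_gt hn

noncomputable def interpolationWeight (w : ℂ) {d : ℕ} (μ : Fin d → ℂ) : ℝ :=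
  ∑ k, (1 - ‖μ k‖ ^ 2) / ‖w - μ k‖ ^ 2 * ∏ j ∈ Iio k, ‖(1 - conj (μ j) * w) / (w - μ j)‖ ^ 2

theorem interpolationWeight_succ (w : ℂ) {d : ℕ} (μ : Fin (d + 1) → ℂ) :
    interpolationWeight w μ = (1 - ‖μ 0‖ ^ 2) / ‖w - μ 0‖ ^ 2
      + ‖(1 - conj (μ 0) * w) / (w - μ 0)‖ ^ 2 * interpolationWeight w (Fin.tail μ) := by
  simp only [interpolationWeight, Fin.sum_univ_succ, Fin.prod_Iio_succ, mul_sum, Fin.tail]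
  congr 1
  · simp [← bot_eq_zero]
  · exact sum_congr rfl fun k _ => by ring

theorem sq_mul_interpolationWeight_mul {d : ℕ} (lam : Fin d → ℂ) {ζ : ℂ}
    (hζ : ∀ j, 1 - conj (lam j) * ζ ≠ 0) {ρ : ℝ} (hρ : ρ ≠ 0) :
    ρ ^ 2 * interpolationWeight (ρ * ζ) (fun i => ρ * lam i)
      = ∑ k : Fin d, (ρ ^ (2 * (k : ℕ)))⁻¹ * ((1 - ρ ^ 2 * ‖lam k‖ ^ 2) / ‖ζ - lam k‖ ^ 2) *
          ∏ j ∈ Iio k, ‖(1 - conj (lam j) * ζ) / (ζ - lam j) *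
            (1 + (1 - (ρ : ℂ) ^ 2) * conj (lam j) * ζ / (1 - conj (lam j) * ζ))‖ ^ 2 := by
  have hfactor (j : Fin d) : ‖(1 - conj ((ρ : ℂ) * lam j) * (ρ * ζ)) / (ρ * ζ - ρ * lam j)‖ ^ 2
      = ‖(1 - conj (lam j) * ζ) / (ζ - lam j) *
          (1 + (1 - (ρ : ℂ) ^ 2) * conj (lam j) * ζ / (1 - conj (lam j) * ζ))‖ ^ 2 * (ρ ^ 2)⁻¹ := by
    have hsimp : (1 - conj (lam j) * ζ) / (ζ - lam j) *
        (1 + (1 - (ρ : ℂ) ^ 2) * conj (lam j) * ζ / (1 - conj (lam j) * ζ))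
        = (1 - ρ ^ 2 * conj (lam j) * ζ) / (ζ - lam j) := by
      field_simp [hζ j]
      ring
    rw [hsimp, map_mul, Complex.conj_ofReal, ← mul_sub]
    simp only [norm_div, norm_mul, Complex.norm_real, Real.norm_eq_abs, div_pow, mul_pow, sq_abs]
    field_simp
  have hfirst (k : Fin d) : (1 - ‖(ρ : ℂ) * lam k‖ ^ 2) / ‖ρ * ζ - ρ * lam k‖ ^ 2
      = (1 - ρ ^ 2 * ‖lam k‖ ^ 2) / ‖ζ - lam k‖ ^ 2 * (ρ ^ 2)⁻¹ := by
    rw [← mul_sub]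
    simp only [norm_mul, Complex.norm_real, Real.norm_eq_abs, mul_pow, sq_abs]
    field_simp
  rw [interpolationWeight, mul_sum]
  refine sum_congr rfl fun k _ => ?_
  rw [hfirst, prod_congr rfl fun j _ => hfactor j, prod_mul_distrib, prod_const, Fin.card_Iio,
    inv_pow, ← pow_mul]
  generalize (∏ j ∈ Iio k, _ : ℝ) = P
  field_simp

namespace PowerSeries

def wienerAlgebra : Subalgebra ℂ ℂ⟦X⟧ where
  carrier := {f | Summable fun n => ‖coeff n f‖}
  mul_mem' {f g} hf hg := show Summable _ from
    (summable_norm_sum_mul_antidiagonal_of_summable_norm hf hg).congr fun n => by rw [coeff_mul]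
  add_mem' {f g} hf hg :=
    (hf.add hg).of_nonneg_of_le (fun _ => norm_nonneg _) fun n => by
      simpa only [map_add] using norm_add_le _ _
  algebraMap_mem' c := by
    refine summable_of_ne_finset_zero (s := {0}) fun n hn => ?_
    simp_all [coeff_C]

theorem mem_wienerAlgebra {f : ℂ⟦X⟧} :
    f ∈ wienerAlgebra ↔ Summable fun n => ‖coeff n f‖ := Iff.rfl

theorem coe_mem_wienerAlgebra (p : Polynomial ℂ) : (p : ℂ⟦X⟧) ∈ wienerAlgebra := by
  refine summable_of_ne_finset_zero (s := range (p.natDegree + 1)) fun n hn => ?_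
  rw [Polynomial.coeff_coe, norm_eq_zero]
  exact Polynomial.coeff_eq_zero_of_natDegree_lt (by simpa [Nat.lt_succ_iff] using hn)

theorem C_mem_wienerAlgebra (c : ℂ) : C c ∈ wienerAlgebra := by
  simpa using coe_mem_wienerAlgebra (Polynomial.C c)

theorem X_mem_wienerAlgebra : (X : ℂ⟦X⟧) ∈ wienerAlgebra := by
  simpa using coe_mem_wienerAlgebra Polynomial.X

section wienerEval

variable {A : Type*} [NormedRing A] [NormedAlgebra ℂ A]

noncomputable def wienerEval (a : A) (f : ℂ⟦X⟧) : A := ∑' n, coeff n f • a ^ n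

variable {a : A} {M : ℝ}

theorem summable_norm_coeff_smul_pow (ha : ∀ n, ‖a ^ n‖ ≤ M) {f : ℂ⟦X⟧}
    (hf : f ∈ wienerAlgebra) : Summable fun n => ‖coeff n f • a ^ n‖ :=
  (hf.mul_right M).of_nonneg_of_le (fun _ => norm_nonneg _) fun n =>
    (norm_smul_le _ _).trans (mul_le_mul_of_nonneg_left (ha n) (norm_nonneg _))

theorem wienerEval_add [CompleteSpace A] (ha : ∀ n, ‖a ^ n‖ ≤ M) {f g : ℂ⟦X⟧}
    (hf : f ∈ wienerAlgebra) (hg : g ∈ wienerAlgebra) :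
    wienerEval a (f + g) = wienerEval a f + wienerEval a g := by
  simp only [wienerEval, map_add, add_smul]
  exact (summable_norm_coeff_smul_pow ha hf).of_norm.tsum_add
    (summable_norm_coeff_smul_pow ha hg).of_norm

theorem wienerEval_mul [CompleteSpace A] (ha : ∀ n, ‖a ^ n‖ ≤ M) {f g : ℂ⟦X⟧}
    (hf : f ∈ wienerAlgebra) (hg : g ∈ wienerAlgebra) :
    wienerEval a (f * g) = wienerEval a f * wienerEval a g := by
  rw [wienerEval, wienerEval, wienerEval, tsum_mul_tsum_eq_tsum_sum_antidiagonal_of_summable_norm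
    (summable_norm_coeff_smul_pow ha hf) (summable_norm_coeff_smul_pow ha hg)]
  refine tsum_congr fun n => ?_
  rw [coeff_mul, sum_smul]
  refine sum_congr rfl fun p hp => ?_
  rw [smul_mul_smul_comm, ← pow_add, mem_antidiagonal.mp hp]

theorem wienerEval_coe (a : A) (p : Polynomial ℂ) : wienerEval a p = Polynomial.aeval a p := by
  rw [wienerEval, Polynomial.aeval_eq_sum_range,
    tsum_eq_sum (s := range (p.natDegree + 1)) fun n hn => ?_]
  · simp only [Polynomial.coeff_coe]
  · rw [Polynomial.coeff_coe, Polynomial.coeff_eq_zero_of_natDegree_lt, zero_smul]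
    simpa [Nat.lt_succ_iff] using hn

theorem wienerEval_C (a : A) (c : ℂ) : wienerEval a (C c) = algebraMap ℂ A c := by
  simpa using wienerEval_coe a (Polynomial.C c)

theorem norm_wienerEval_le {r : ℝ} (ha : ∀ n, ‖a ^ n‖ ≤ M * r ^ n) (hr0 : 0 ≤ r) (hr1 : r ≤ 1)
    {f : ℂ⟦X⟧} (hf : f ∈ wienerAlgebra) :
    ‖wienerEval a f‖ ≤ M * ∑' n, ‖coeff n f‖ * r ^ n := by
  have hM : 0 ≤ M := by simpa using (norm_nonneg _).trans (ha 0)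
  have ha' (n : ℕ) : ‖a ^ n‖ ≤ M := (ha n).trans (mul_le_of_le_one_right hM (pow_le_one₀ hr0 hr1))
  have hfr : Summable fun n => ‖coeff n f‖ * r ^ n :=
    hf.of_nonneg_of_le (fun _ => by positivity) fun n =>
      mul_le_of_le_one_right (norm_nonneg _) (pow_le_one₀ hr0 hr1)
  rw [← tsum_mul_left]
  refine (norm_tsum_le_tsum_norm (summable_norm_coeff_smul_pow ha' hf)).trans ?_
  refine (summable_norm_coeff_smul_pow ha' hf).tsum_le_tsum (fun n => ?_) (hfr.mul_left M)
  calc ‖coeff n f • a ^ n‖ ≤ ‖coeff n f‖ * (M * r ^ n) :=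
        (norm_smul_le _ _).trans (mul_le_mul_of_nonneg_left (ha n) (norm_nonneg _))
    _ = M * (‖coeff n f‖ * r ^ n) := by ring

theorem smul_one_sub_mul_wienerEval_eq [CompleteSpace A] (ha : ∀ n, ‖a ^ n‖ ≤ M) {w c : ℂ}
    {h g : ℂ⟦X⟧} {p : Polynomial ℂ} (hh : h ∈ wienerAlgebra) (hg : g ∈ wienerAlgebra)
    (hp : Polynomial.aeval a p = 0) (hid : (C w - X) * h = C c + (p : ℂ⟦X⟧) * g) :
    (w • 1 - a) * wienerEval a h = c • 1 ∧ wienerEval a h * (w • 1 - a) = c • 1 := by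
  have hq : C w - X = ((Polynomial.C w - Polynomial.X : Polynomial ℂ) : ℂ⟦X⟧) := by simp
  have hqmem : C w - X ∈ wienerAlgebra := hq ▸ coe_mem_wienerAlgebra _
  have hqa : wienerEval a (C w - X) = w • 1 - a := by
    rw [hq, wienerEval_coe]
    simp only [map_sub, Polynomial.aeval_C, Polynomial.aeval_X, Algebra.algebraMap_eq_smul_one]
  have hright : (w • 1 - a) * wienerEval a h = c • 1 := by
    rw [← hqa, ← wienerEval_mul ha hqmem hh, hid,
      wienerEval_add ha (C_mem_wienerAlgebra c) (mul_mem (coe_mem_wienerAlgebra p) hg),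
      wienerEval_mul ha (coe_mem_wienerAlgebra p) hg, wienerEval_C, wienerEval_coe, hp, zero_mul,
      add_zero, Algebra.algebraMap_eq_smul_one]
  refine ⟨hright, ?_⟩
  rw [← hqa, ← wienerEval_mul ha hh hqmem, mul_comm, wienerEval_mul ha hqmem hh, hqa, hright]

end wienerEval

def szegoKernel (μ : ℂ) : ℂ⟦X⟧ := mk fun n => conj μ ^ n

theorem coeff_szegoKernel (μ : ℂ) (n : ℕ) : coeff n (szegoKernel μ) = conj μ ^ n :=
  coeff_mk _ _

theorem szegoKernel_mem_wienerAlgebra {μ : ℂ} (hμ : ‖μ‖ < 1) :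
    szegoKernel μ ∈ wienerAlgebra := by
  simpa [mem_wienerAlgebra, coeff_szegoKernel] using
    summable_geometric_of_lt_one (norm_nonneg μ) hμ

theorem one_sub_C_mul_X_mul_szegoKernel (μ : ℂ) :
    (1 - C (conj μ) * X) * szegoKernel μ = 1 := by
  ext (_ | n) <;>
    simp [sub_mul, mul_assoc, coeff_szegoKernel, pow_succ', coeff_one, coeff_zero_X_mul,
      -coeff_zero_eq_constantCoeff]

noncomputable def blaschkeFactor (μ : ℂ) : ℂ⟦X⟧ := (X - C μ) * szegoKernel μ

theorem blaschkeFactor_mem_wienerAlgebra {μ : ℂ} (hμ : ‖μ‖ < 1) :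
    blaschkeFactor μ ∈ wienerAlgebra :=
  mul_mem (sub_mem X_mem_wienerAlgebra (C_mem_wienerAlgebra μ)) (szegoKernel_mem_wienerAlgebra hμ)

theorem wienerEval_blaschkeFactor_mul {μ : ℂ} (hμ : ‖μ‖ < 1) {f : ℂ⟦X⟧}
    (hf : f ∈ wienerAlgebra) : wienerEval μ (blaschkeFactor μ * f) = 0 := by
  have hpow (n : ℕ) : ‖μ ^ n‖ ≤ 1 := by rw [norm_pow]; exact pow_le_one₀ (norm_nonneg μ) hμ.le
  have hcoe : X - C μ = ((Polynomial.X - Polynomial.C μ : Polynomial ℂ) : ℂ⟦X⟧) := by simp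
  rw [blaschkeFactor, mul_assoc, hcoe, wienerEval_mul hpow (coe_mem_wienerAlgebra _)
    (mul_mem (szegoKernel_mem_wienerAlgebra hμ) hf), wienerEval_coe]
  simp

noncomputable def hardyNormSq (f : ℂ⟦X⟧) : ℝ := ∑' n, ‖coeff n f‖ ^ 2

noncomputable def hardyInner (f g : ℂ⟦X⟧) : ℂ := ∑' n, coeff n f * conj (coeff n g)

theorem summable_sq_norm_coeff {f : ℂ⟦X⟧} (hf : f ∈ wienerAlgebra) :
    Summable fun n => ‖coeff n f‖ ^ 2 :=
  (hf.mul_left (∑' n, ‖coeff n f‖)).of_nonneg_of_le (fun _ => sq_nonneg _) fun n => by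
    rw [sq]
    exact mul_le_mul_of_nonneg_right (hf.le_tsum n fun _ _ => norm_nonneg _) (norm_nonneg _)

theorem summable_sq_norm_coeff_X_mul {u : ℂ⟦X⟧} (hu : Summable fun n => ‖coeff n u‖ ^ 2) :
    Summable fun n => ‖coeff n (X * u)‖ ^ 2 :=
  (summable_nat_add_iff 1).mp (by simpa only [coeff_succ_X_mul] using hu)

theorem summable_sq_norm_coeff_C_mul (a : ℂ) {u : ℂ⟦X⟧}
    (hu : Summable fun n => ‖coeff n u‖ ^ 2) : Summable fun n => ‖coeff n (C a * u)‖ ^ 2 := by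
  simpa only [coeff_C_mul, norm_mul, mul_pow] using hu.mul_left (‖a‖ ^ 2)

theorem hardyNormSq_add {f g : ℂ⟦X⟧} (hf : Summable fun n => ‖coeff n f‖ ^ 2)
    (hg : Summable fun n => ‖coeff n g‖ ^ 2) :
    hardyNormSq (f + g) = hardyNormSq f + hardyNormSq g + 2 * (hardyInner f g).re := by
  have hfg : Summable fun n => coeff n f * conj (coeff n g) :=
    Summable.of_norm_bounded ((hf.add hg).div_const 2) fun n => by
      rw [norm_mul, Complex.norm_conj]
      nlinarith [sq_nonneg (‖coeff n f‖ - ‖coeff n g‖)]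
  have hre : Summable fun n => (coeff n f * conj (coeff n g)).re := Complex.reCLM.summable hfg
  have hterm (n : ℕ) : ‖coeff n (f + g)‖ ^ 2 = ‖coeff n f‖ ^ 2 + ‖coeff n g‖ ^ 2
      + 2 * (coeff n f * conj (coeff n g)).re := by
    simp only [map_add, Complex.sq_norm, Complex.normSq_add]
  rw [hardyNormSq, tsum_congr hterm, (hf.add hg).tsum_add (hre.mul_left 2), hf.tsum_add hg,
    tsum_mul_left, hardyInner, Complex.re_tsum hfg, hardyNormSq, hardyNormSq]

theorem hardyNormSq_C_mul (a : ℂ) (f : ℂ⟦X⟧) :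
    hardyNormSq (C a * f) = ‖a‖ ^ 2 * hardyNormSq f := by
  simp only [hardyNormSq, coeff_C_mul, norm_mul, mul_pow, tsum_mul_left]

theorem hardyNormSq_X_mul (f : ℂ⟦X⟧) : hardyNormSq (X * f) = hardyNormSq f := by
  rw [hardyNormSq, ← Nat.succ_injective.tsum_eq fun n hn => ?_]
  · simp [hardyNormSq, coeff_succ_X_mul]
  · cases n with
    | zero => simp at hn
    | succ n => exact ⟨n, rfl⟩

theorem hardyInner_C_mul_left (a : ℂ) (f g : ℂ⟦X⟧) :
    hardyInner (C a * f) g = a * hardyInner f g := by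
  simp only [hardyInner, coeff_C_mul, mul_assoc, tsum_mul_left]

theorem hardyInner_C_mul_right (a : ℂ) (f g : ℂ⟦X⟧) :
    hardyInner f (C a * g) = conj a * hardyInner f g := by
  simp only [hardyInner, coeff_C_mul, map_mul, mul_left_comm _ (conj a), tsum_mul_left]

theorem conj_hardyInner (f g : ℂ⟦X⟧) : conj (hardyInner f g) = hardyInner g f := by
  simp only [hardyInner, Complex.conj_tsum, map_mul, Complex.conj_conj, mul_comm]

theorem hardyInner_szegoKernel_left (μ : ℂ) (g : ℂ⟦X⟧) :
    hardyInner (szegoKernel μ) g = conj (wienerEval μ g) := by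
  simp only [hardyInner, wienerEval, Complex.conj_tsum, coeff_szegoKernel, smul_eq_mul, map_mul,
    map_pow, mul_comm]

theorem hardyNormSq_szegoKernel {μ : ℂ} (hμ : ‖μ‖ < 1) :
    hardyNormSq (szegoKernel μ) = (1 - ‖μ‖ ^ 2)⁻¹ := by
  have hμ2 : ‖μ‖ ^ 2 < 1 := by nlinarith [norm_nonneg μ]
  simp_rw [hardyNormSq, coeff_szegoKernel, norm_pow, Complex.norm_conj, ← pow_mul, mul_comm _ 2,
    pow_mul]
  exact tsum_geometric_of_lt_one (sq_nonneg _) hμ2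

/-- Both sides are `(1 + |μ|²) ‖u‖²` plus twice the real part of mutually conjugate cross terms. -/
theorem hardyNormSq_X_sub_C_mul (μ : ℂ) {u : ℂ⟦X⟧} (hu : Summable fun n => ‖coeff n u‖ ^ 2) :
    hardyNormSq ((X - C μ) * u) = hardyNormSq ((1 - C (conj μ) * X) * u) := by
  have hXu := summable_sq_norm_coeff_X_mul hu
  calc hardyNormSq ((X - C μ) * u) = hardyNormSq (X * u + C (-μ) * u) := by
        rw [map_neg]; ring_nf
    _ = hardyNormSq u + ‖μ‖ ^ 2 * hardyNormSq (X * u)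
          + 2 * (conj (-conj μ) * hardyInner u (X * u)).re := by
        rw [hardyNormSq_add hXu (summable_sq_norm_coeff_C_mul _ hu), hardyNormSq_C_mul,
          hardyInner_C_mul_right, hardyNormSq_X_mul, norm_neg, ← conj_hardyInner, ← map_mul,
          Complex.conj_re, map_neg, Complex.conj_conj]
    _ = hardyNormSq ((1 - C (conj μ) * X) * u) := by
        rw [show ‖μ‖ = ‖-conj μ‖ by simp, ← hardyNormSq_C_mul, ← hardyInner_C_mul_right,
          ← hardyNormSq_add hu (summable_sq_norm_coeff_C_mul _ hXu), map_neg]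
        ring_nf

theorem hardyNormSq_blaschkeFactor_mul {μ : ℂ} (hμ : ‖μ‖ < 1) {f : ℂ⟦X⟧}
    (hf : f ∈ wienerAlgebra) : hardyNormSq (blaschkeFactor μ * f) = hardyNormSq f := by
  conv_rhs => rw [← one_mul f, ← one_sub_C_mul_X_mul_szegoKernel μ, mul_assoc]
  rw [blaschkeFactor, mul_assoc, hardyNormSq_X_sub_C_mul μ
    (summable_sq_norm_coeff (mul_mem (szegoKernel_mem_wienerAlgebra hμ) hf))]

/-- The summands are orthogonal: `szegoKernel μ` reproduces evaluation at `μ`, where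
`blaschkeFactor μ` vanishes. -/
theorem hardyNormSq_C_mul_szegoKernel_add_blaschkeFactor_mul {μ : ℂ} (hμ : ‖μ‖ < 1) (α : ℂ)
    {f : ℂ⟦X⟧} (hf : f ∈ wienerAlgebra) :
    hardyNormSq (C α * szegoKernel μ + blaschkeFactor μ * f)
      = ‖α‖ ^ 2 / (1 - ‖μ‖ ^ 2) + hardyNormSq f := by
  rw [hardyNormSq_add
      (summable_sq_norm_coeff (mul_mem (C_mem_wienerAlgebra α) (szegoKernel_mem_wienerAlgebra hμ)))
      (summable_sq_norm_coeff (mul_mem (blaschkeFactor_mem_wienerAlgebra hμ) hf)),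
    hardyNormSq_C_mul, hardyNormSq_szegoKernel hμ, hardyNormSq_blaschkeFactor_mul hμ hf,
    hardyInner_C_mul_left, hardyInner_szegoKernel_left, wienerEval_blaschkeFactor_mul hμ hf]
  simp [div_eq_mul_inv]

theorem sq_norm_wienerEval_le {A : Type*} [NormedRing A] [NormedAlgebra ℂ A] {a : A} {M r : ℝ}
    (ha : ∀ n, ‖a ^ n‖ ≤ M * r ^ n) (hr0 : 0 ≤ r) (hr1 : r < 1) {f : ℂ⟦X⟧}
    (hf : f ∈ wienerAlgebra) :
    ‖wienerEval a f‖ ^ 2 ≤ M ^ 2 / (1 - r ^ 2) * hardyNormSq f := by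
  calc ‖wienerEval a f‖ ^ 2 ≤ (M * ∑' n, ‖coeff n f‖ * r ^ n) ^ 2 :=
        pow_le_pow_left₀ (norm_nonneg _) (norm_wienerEval_le ha hr0 hr1.le hf) 2
    _ ≤ M ^ 2 * (hardyNormSq f / (1 - r ^ 2)) := by
      rw [mul_pow]
      exact mul_le_mul_of_nonneg_left
        (sq_tsum_mul_pow_le (fun n => norm_nonneg _) (summable_sq_norm_coeff hf) hr0 hr1)
        (sq_nonneg M)
    _ = M ^ 2 / (1 - r ^ 2) * hardyNormSq f := by ring

/-- For the two coefficients `α`, `c'` below, `c/(w - z) = α/(1 - μ̄₀z) + b_{μ₀}(z) · c'/(w - z)`;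
so the result agrees with `c/(w - z)` at the nodes `μ i`, to their multiplicities. -/
noncomputable def resolventInterpolant (w : ℂ) : {d : ℕ} → (Fin d → ℂ) → ℂ → ℂ⟦X⟧
  | 0, _, _ => 0
  | _ + 1, μ, c => C (c * (1 - ‖μ 0‖ ^ 2) / (w - μ 0)) * szegoKernel (μ 0)
      + blaschkeFactor (μ 0) *
        resolventInterpolant w (Fin.tail μ) (c * (1 - conj (μ 0) * w) / (w - μ 0))

theorem resolventInterpolant_mem_wienerAlgebra (w : ℂ) {d : ℕ} (μ : Fin d → ℂ)
    (hμ : ∀ i, ‖μ i‖ < 1) (c : ℂ) : resolventInterpolant w μ c ∈ wienerAlgebra := by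
  induction d generalizing c with
  | zero => exact zero_mem _
  | succ d ih =>
    exact add_mem (mul_mem (C_mem_wienerAlgebra _) (szegoKernel_mem_wienerAlgebra (hμ 0)))
      (mul_mem (blaschkeFactor_mem_wienerAlgebra (hμ 0)) (ih _ (fun i => hμ i.succ) _))

theorem exists_C_sub_X_mul_resolventInterpolant_eq (w : ℂ) {d : ℕ} (μ : Fin d → ℂ)
    (hμ : ∀ i, ‖μ i‖ < 1) (hw : ∀ i, w ≠ μ i) (c : ℂ) :
    ∃ g ∈ wienerAlgebra, (C w - X) * resolventInterpolant w μ c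
      = C c + ((∏ i, (Polynomial.X - Polynomial.C (μ i)) : Polynomial ℂ) : ℂ⟦X⟧) * g := by
  induction d generalizing c with
  | zero => exact ⟨-C c, neg_mem (C_mem_wienerAlgebra c), by simp [resolventInterpolant]⟩
  | succ d ih =>
    obtain ⟨g, hg, hid⟩ := ih (Fin.tail μ) (fun i => hμ i.succ) (fun i => hw i.succ)
      (c * (1 - conj (μ 0) * w) / (w - μ 0))
    refine ⟨szegoKernel (μ 0) * g, mul_mem (szegoKernel_mem_wienerAlgebra (hμ 0)) hg, ?_⟩
    have hw0 : w - μ 0 ≠ 0 := sub_ne_zero.mpr (hw 0)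
    set α := c * (1 - ‖μ 0‖ ^ 2) / (w - μ 0) with hα
    set c' := c * (1 - conj (μ 0) * w) / (w - μ 0) with hc'
    have e1 : C w * C α - C (μ 0) * C c' = C c := by
      simp only [← map_mul, ← map_sub, hα, hc', ← Complex.conj_mul']
      congr 1; field_simp; ring
    have e2 : C c' - C α = -(C c * C (conj (μ 0))) := by
      simp only [← map_mul, ← map_sub, ← map_neg, hα, hc', ← Complex.conj_mul']
      congr 1; field_simp; ring
    have hlin : (C w - X) * C α + (X - C (μ 0)) * C c' = C c * (1 - C (conj (μ 0)) * X) := by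
      linear_combination e1 + X * e2
    simp only [resolventInterpolant, blaschkeFactor, Fin.prod_univ_succ, Polynomial.coe_mul,
      Polynomial.coe_sub, Polynomial.coe_X, Polynomial.coe_C, Fin.tail] at hid ⊢
    linear_combination (X - C (μ 0)) * szegoKernel (μ 0) * hid + szegoKernel (μ 0) * hlin
      + C c * one_sub_C_mul_X_mul_szegoKernel (μ 0)

theorem hardyNormSq_resolventInterpolant (w : ℂ) {d : ℕ} (μ : Fin d → ℂ) (hμ : ∀ i, ‖μ i‖ < 1)
    (hw : ∀ i, w ≠ μ i) (c : ℂ) :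
    hardyNormSq (resolventInterpolant w μ c) = ‖c‖ ^ 2 * interpolationWeight w μ := by
  induction d generalizing c with
  | zero => simp [resolventInterpolant, interpolationWeight, hardyNormSq]
  | succ d ih =>
    have hμ0 : 0 < 1 - ‖μ 0‖ ^ 2 := by nlinarith [hμ 0, norm_nonneg (μ 0)]
    have hnorm : ‖(1 : ℂ) - ‖μ 0‖ ^ 2‖ = 1 - ‖μ 0‖ ^ 2 := by
      rw [← Complex.ofReal_one, ← Complex.ofReal_pow, ← Complex.ofReal_sub, Complex.norm_real,
        Real.norm_of_nonneg hμ0.le]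
    rw [resolventInterpolant, hardyNormSq_C_mul_szegoKernel_add_blaschkeFactor_mul (hμ 0) _
      (resolventInterpolant_mem_wienerAlgebra w (Fin.tail μ) (fun i => hμ i.succ) _),
      ih (Fin.tail μ) (fun i => hμ i.succ) (fun i => hw i.succ), interpolationWeight_succ]
    simp only [norm_div, norm_mul, hnorm]
    field_simp

end PowerSeries

open PowerSeries in
theorem exists_inverse_smul_one_sub_norm_sq_le {A : Type*} [NormedRing A] [NormedAlgebra ℂ A]
    [CompleteSpace A] {T : A} {M : ℝ} (hT : ∀ n, ‖T ^ n‖ ≤ M) {d : ℕ} {lam : Fin d → ℂ}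
    (hlam : ∀ i, ‖lam i‖ ≤ 1)
    (hp : Polynomial.aeval T (∏ i, (Polynomial.X - Polynomial.C (lam i))) = 0)
    {ζ : ℂ} (hζ : ∀ i, ζ ≠ lam i) {ρ : ℝ} (hρ0 : 0 < ρ) (hρ1 : ρ < 1) :
    ∃ S : A, (ζ • 1 - T) * S = 1 ∧ S * (ζ • 1 - T) = 1 ∧
      ‖S‖ ^ 2 ≤ M ^ 2 / (1 - ρ ^ 2) * (ρ ^ 2 * interpolationWeight (ρ * ζ) fun i => ρ * lam i) := by
  have hρ : (ρ : ℂ) ≠ 0 := Complex.ofReal_ne_zero.mpr hρ0.ne'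
  set μ : Fin d → ℂ := fun i => ρ * lam i
  have hμ (i : Fin d) : ‖μ i‖ < 1 := by
    simp only [μ, norm_mul, Complex.norm_real, Real.norm_of_nonneg hρ0.le]
    nlinarith [hlam i, norm_nonneg (lam i)]
  have hw (i : Fin d) : ρ * ζ ≠ μ i := fun h => hζ i (mul_left_cancel₀ hρ h)
  set h := resolventInterpolant (ρ * ζ) μ ρ
  have hh : h ∈ wienerAlgebra := resolventInterpolant_mem_wienerAlgebra _ μ hμ _
  obtain ⟨g, hg, hid⟩ := exists_C_sub_X_mul_resolventInterpolant_eq _ μ hμ hw ρ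
  have hb (n : ℕ) : ‖((ρ : ℂ) • T) ^ n‖ ≤ M * ρ ^ n := by
    rw [smul_pow, norm_smul, norm_pow, Complex.norm_real, Real.norm_of_nonneg hρ0.le, mul_comm]
    exact mul_le_mul_of_nonneg_right (hT n) (by positivity)
  have hb' (n : ℕ) : ‖((ρ : ℂ) • T) ^ n‖ ≤ M :=
    (hb n).trans (mul_le_of_le_one_right ((norm_nonneg _).trans (hT 0)) (pow_le_one₀ hρ0.le hρ1.le))
  obtain ⟨hright, hleft⟩ := smul_one_sub_mul_wienerEval_eq hb' hh hg
    (by rw [Polynomial.aeval_smul_prod_X_sub_C_mul, hp, smul_zero]) hid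
  have hscale : ((ρ : ℂ) * ζ) • (1 : A) - (ρ : ℂ) • T = (ρ : ℂ) • (ζ • 1 - T) := by
    rw [smul_sub, smul_smul]
  rw [hscale, smul_mul_assoc] at hright
  rw [hscale, mul_smul_comm] at hleft
  refine ⟨_, smul_right_injective A hρ hright, smul_right_injective A hρ hleft, ?_⟩
  calc _ ≤ M ^ 2 / (1 - ρ ^ 2) * hardyNormSq h := sq_norm_wienerEval_le hb hρ0.le hρ1 hh
    _ = _ := by
      rw [hardyNormSq_resolventInterpolant _ μ hμ hw, Complex.norm_real,
        Real.norm_of_nonneg hρ0.le]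

theorem resolvent_squared_bound_main_lemma_general
    {E : Type*} [NormedAddCommGroup E] [NormedSpace ℂ E] [FiniteDimensional ℂ E]
    (T : E →L[ℂ] E) (C : ℝ) (hpb : ∀ j : ℕ, ‖T ^ j‖ ≤ C)
    (d : ℕ) (lam : Fin d → ℂ)
    (hmin : minpoly ℂ T = ∏ i : Fin d, (Polynomial.X - Polynomial.C (lam i)))
    (ζ : ℂ) (hζ1 : ∀ j, ζ ≠ lam j) (hζ2 : ∀ j, 1 - (starRingEnd ℂ) (lam j) * ζ ≠ 0) :
    ∃ S : E →L[ℂ] E, (ζ • 1 - T) * S = 1 ∧ S * (ζ • 1 - T) = 1 ∧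
      ∀ ρ : ℝ, 0 < ρ → ρ < 1 →
        ‖S‖ ^ 2 ≤ C ^ 2 / (1 - ρ ^ 2) *
          ∑ k : Fin d, (ρ ^ (2 * (k : ℕ)))⁻¹ *
            ((1 - ρ ^ 2 * ‖lam k‖ ^ 2) / ‖ζ - lam k‖ ^ 2) *
            ∏ j ∈ Finset.Iio k,
              ‖(1 - (starRingEnd ℂ) (lam j) * ζ) / (ζ - lam j) *
                (1 + (1 - (ρ : ℂ) ^ 2) * (starRingEnd ℂ) (lam j) * ζ /
                  (1 - (starRingEnd ℂ) (lam j) * ζ))‖ ^ 2 := by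
  have hlam (i : Fin d) : ‖lam i‖ ≤ 1 := T.norm_le_one_of_isRoot_minpoly hpb
    (by simp [hmin, Polynomial.eval_prod, prod_eq_zero_iff, sub_eq_zero])
  have hres {ρ : ℝ} (hρ0 : 0 < ρ) (hρ1 : ρ < 1) :=
    exists_inverse_smul_one_sub_norm_sq_le hpb hlam (hmin ▸ minpoly.aeval ℂ T) hζ1 hρ0 hρ1
  obtain ⟨S, hright, hleft, -⟩ := hres (ρ := 1 / 2) (by norm_num) (by norm_num)
  refine ⟨S, hright, hleft, fun ρ hρ0 hρ1 => ?_⟩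
  obtain ⟨S', hS', -, hbound⟩ := hres hρ0 hρ1
  rwa [← left_inv_eq_right_inv hleft hS', sq_mul_interpolationWeight_mul lam hζ2 hρ0.ne'] at hbound

/-- the main lemma: If T is power bounded by C with minimal polynomial
∏_{i=1}^d (z−λ_i) and ζ avoids the roots λ_j and the points 1/conj(λ_j), then ζI − T is
invertible and for every ρ ∈ (0,1),
‖(ζI−T)⁻¹‖² ≤ (C²/(1−ρ²))·∑_{k=1}^d ρ^{−(2k−2)}·(1−ρ²|λ_k|²)/|ζ−λ_k|²·
∏_{j<k} |(1−conj(λ_j)ζ)/(ζ−λ_j)·(1+(1−ρ²)conj(λ_j)ζ/(1−conj(λ_j)ζ))|². -/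
theorem resolvent_squared_bound_main_lemma
    {E : Type*} [NormedAddCommGroup E] [NormedSpace ℂ E] [FiniteDimensional ℂ E]
    (n : ℕ) (hn : 1 ≤ n) (hdim : Module.finrank ℂ E = n)
    (T : E →L[ℂ] E) (C : ℝ) (hC : 1 ≤ C) (hpb : ∀ j : ℕ, ‖T ^ j‖ ≤ C)
    (d : ℕ) (hd : 0 < d) (lam : Fin d → ℂ)
    (hmin : minpoly ℂ T = ∏ i : Fin d, (Polynomial.X - Polynomial.C (lam i)))
    (ζ : ℂ) (hζ1 : ∀ j, ζ ≠ lam j) (hζ2 : ∀ j, 1 - (starRingEnd ℂ) (lam j) * ζ ≠ 0) :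
    ∃ S : E →L[ℂ] E, (ζ • 1 - T) * S = 1 ∧ S * (ζ • 1 - T) = 1 ∧
      ∀ ρ : ℝ, 0 < ρ → ρ < 1 →
        ‖S‖ ^ 2 ≤ C ^ 2 / (1 - ρ ^ 2) *
          ∑ k : Fin d, (ρ ^ (2 * (k : ℕ)))⁻¹ *
            ((1 - ρ ^ 2 * ‖lam k‖ ^ 2) / ‖ζ - lam k‖ ^ 2) *
            ∏ j ∈ Finset.Iio k,
              ‖(1 - (starRingEnd ℂ) (lam j) * ζ) / (ζ - lam j) *
                (1 + (1 - (ρ : ℂ) ^ 2) * (starRingEnd ℂ) (lam j) * ζ /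
                  (1 - (starRingEnd ℂ) (lam j) * ζ))‖ ^ 2 :=
  resolvent_squared_bound_main_lemma_general T C hpb d lam hmin ζ hζ1 hζ2
end

section
/- Fix λ ∈ (0,1), set α₀ = (1−λ)/(1+λ), and fix α ∈ (0, α₀). Then there exist constants M > 0, q ∈ (0,1) and an integer N such that for all n ≥ N and all integers k ≥ 0 with k ≤ αn or k ≥ n/α, one has |c_{n,k}| ≤ M·qⁿ; i.e., the Taylor coefficients of (1−z²)((z−λ)/(1−λz))ⁿ decay exponentially in n outside the range αn ≤ k ≤ n/α. -/
/-!
Cauchy's estimate on the circle `‖z‖ = r` gives `‖c n k‖ ≤ (1 + r²) ρ(r)ⁿ / rᵏ`, where `ρ(r)` is the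
maximum of the Blaschke factor on that circle: `(r + λ) / (1 + λ r)` for `r ≤ 1` and
`(r - λ) / (1 - λ r)` for `1 ≤ r < 1 / λ`. Near `r = 1` these behave like `1 - α₀ (1 - r)` and
`1 + (r - 1) / α₀`, so for `α < α₀` there are radii `r < 1` with `ρ(r) < r ^ α`, which handles
`k ≤ α n`, and `R > 1` with `ρ(R) < R ^ α⁻¹`, which handles `k ≥ n / α`. Bernoulli's inequality
makes both choices explicit.
-/

open Metric FormalMultilinearSeries Complex
open scoped NNReal

theorem hasFPowerSeriesOnBall_ofScalars_of_hasSum_s11 {𝕜 : Type*} [RCLike 𝕜]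
    {f : 𝕜 → 𝕜} {a : ℕ → 𝕜} {ρ : ℝ≥0} (hρ : 0 < ρ)
    (ha : ∀ z : 𝕜, ‖z‖ < ρ → HasSum (fun k ↦ a k * z ^ k) (f z)) :
    HasFPowerSeriesOnBall f (ofScalars 𝕜 a) 0 ρ where
  r_le := by
    refine ENNReal.le_of_forall_nnreal_lt fun r hr ↦ (ofScalars 𝕜 a).le_radius_of_tendsto
      (l := 0) ?_
    have hr' : ‖((r : ℝ) : 𝕜)‖ < ρ := by simpa using hr
    simpa [ofScalars_norm, norm_mul, norm_pow] using
      (ha _ hr').summable.tendsto_atTop_zero.norm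
  r_pos := by exact_mod_cast hρ
  hasSum {z} hz := by
    simpa [ofScalars_apply_eq, mul_comm] using ha z (by simpa using hz)

theorem norm_coeff_le_of_hasFPowerSeriesAt {f : ℂ → ℂ} {a : ℕ → ℂ}
    (hf : HasFPowerSeriesAt f (ofScalars ℂ a) 0) {R B : ℝ} (hR : 0 < R)
    (hfR : DiffContOnCl ℂ f (ball 0 R)) (hB : ∀ z ∈ sphere (0 : ℂ) R, ‖f z‖ ≤ B) (k : ℕ) :
    ‖a k‖ ≤ B / R ^ k := by
  have hcoeff : a = fun k ↦ iteratedDeriv k f 0 / k.factorial :=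
    ofScalars_series_injective ℂ ℂ
      (hf.eq_formalMultilinearSeries hf.analyticAt.hasFPowerSeriesAt)
  have hk := Complex.norm_iteratedDeriv_le_of_forall_mem_sphere_norm_le k hR hfR hB
  rw [hcoeff, norm_div, Complex.norm_natCast, div_le_iff₀ (by positivity)]
  calc ‖iteratedDeriv k f 0‖ ≤ k.factorial * B / R ^ k := hk
    _ = B / R ^ k * k.factorial := by ring

theorem pow_rpow_le_pow_of_le_one {x β : ℝ} {n k : ℕ} (hx0 : 0 < x) (hx1 : x ≤ 1)
    (h : k ≤ β * n) : (x ^ β) ^ n ≤ x ^ k := by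
  rw [← Real.rpow_mul_natCast hx0.le, ← Real.rpow_natCast]
  exact Real.rpow_le_rpow_of_exponent_ge hx0 hx1 h

theorem pow_rpow_le_pow_of_one_le {x β : ℝ} {n k : ℕ} (hx : 1 ≤ x) (h : β * n ≤ k) :
    (x ^ β) ^ n ≤ x ^ k := by
  rw [← Real.rpow_mul_natCast (by linarith), ← Real.rpow_natCast]
  exact Real.rpow_le_rpow_of_exponent_le hx h

theorem div_add_mul_one_sub_le_rpow {r α : ℝ} (hr : 0 < r) (hα0 : 0 ≤ α) (hα1 : α ≤ 1) :
    r / (r + α * (1 - r)) ≤ r ^ α := by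
  have hbern := rpow_one_add_le_one_add_mul_self (s := r⁻¹ - 1)
    (by have := inv_pos.2 hr; linarith) hα0 hα1
  rw [add_sub_cancel, Real.inv_rpow hr.le] at hbern
  rw [div_le_iff₀ (by nlinarith [mul_nonneg hr.le (sub_nonneg.2 hα1)]),
    ← div_le_iff₀' (by positivity), div_eq_mul_inv, mul_comm]
  calc (r ^ α)⁻¹ * r ≤ (1 + α * (r⁻¹ - 1)) * r := by gcongr
    _ = r + α * (1 - r) := by field_simp

theorem exists_lt_one_div_lt_rpow {a α : ℝ} (ha : 0 ≤ a) (hα : 0 < α)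
    (hαa : α < (1 - a) / (1 + a)) : ∃ r, 0 < r ∧ r < 1 ∧ (r + a) / (1 + a * r) < r ^ α := by
  rw [lt_div_iff₀ (by linarith)] at hαa
  obtain ⟨d, hd, hαd⟩ : ∃ d, 0 < d ∧ α * (1 + a) = 1 - a - d := ⟨_, sub_pos.2 hαa, by ring⟩
  refine ⟨1 - d / 2, by nlinarith, by linarith, ?_⟩
  refine lt_of_lt_of_le ?_ (div_add_mul_one_sub_le_rpow (by nlinarith) hα.le (by nlinarith))
  rw [div_lt_div_iff₀ (by nlinarith) (by nlinarith)]
  -- the difference of the two sides is `d² (1 + a + α) / 4`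
  nlinarith [mul_pos (mul_pos hd hd) (by linarith : 0 < 1 + a + α)]

theorem exists_one_lt_div_lt_rpow {a α : ℝ} (ha : 0 < a) (hα : 0 < α)
    (hαa : α < (1 - a) / (1 + a)) :
    ∃ R, 1 < R ∧ a * R < 1 ∧ (R - a) / (1 - a * R) < R ^ α⁻¹ := by
  rw [lt_div_iff₀ (by linarith)] at hαa
  obtain ⟨d, hd, hαd⟩ : ∃ d, 0 < d ∧ α * (1 + a) = 1 - a - d := ⟨_, sub_pos.2 hαa, by ring⟩
  obtain ⟨t, ht, hat⟩ : ∃ t, 0 < t ∧ a * t = d / 2 := ⟨d / (2 * a), by positivity, by field_simp⟩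
  have haR : a * (1 + t) < 1 := by nlinarith [mul_pos hα (by linarith : 0 < 1 + a)]
  refine ⟨1 + t, by linarith, haR, ?_⟩
  calc (1 + t - a) / (1 - a * (1 + t)) < 1 + α⁻¹ * t := by
        rw [div_lt_iff₀ (by linarith)]
        have key : (1 + α⁻¹ * t) * (1 - a * (1 + t)) - (1 + t - a) = α⁻¹ * t * (d / 2) := by
          field_simp
          linear_combination (-2 * t) * hαd + (- 2 * t) * hat
        nlinarith [mul_pos (mul_pos (inv_pos.2 hα) ht) hd]
    _ ≤ (1 + t) ^ α⁻¹ :=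
        one_add_mul_self_le_rpow_one_add (by linarith) (one_le_inv_iff₀.2 ⟨hα, by nlinarith⟩)

noncomputable def blaschke (a : ℝ) (z : ℂ) : ℂ := (z - a) / (1 - a * z)

theorem norm_sub_ofReal_sq (z : ℂ) (a : ℝ) : ‖z - a‖ ^ 2 = ‖z‖ ^ 2 - 2 * a * z.re + a ^ 2 := by
  simp only [Complex.sq_norm, normSq_apply, sub_re, sub_im, ofReal_re, ofReal_im]
  ring

theorem norm_one_sub_ofReal_mul_sq (z : ℂ) (a : ℝ) :
    ‖1 - a * z‖ ^ 2 = 1 - 2 * a * z.re + a ^ 2 * ‖z‖ ^ 2 := by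
  simp only [Complex.sq_norm, normSq_apply, sub_re, sub_im, one_re, one_im, mul_re, mul_im,
    ofReal_re, ofReal_im]
  ring

theorem norm_one_sub_ofReal_mul_pos {a : ℝ} {z : ℂ} (h : |a| * ‖z‖ < 1) : 0 < ‖1 - a * z‖ := by
  refine norm_pos_iff.2 (sub_ne_zero.2 fun h1 ↦ ?_)
  have : ‖(a : ℂ) * z‖ = 1 := by rw [← h1, norm_one]
  rw [norm_mul, norm_real, Real.norm_eq_abs] at this
  linarith

theorem norm_blaschke_le_of_norm_le_one {a : ℝ} (ha0 : 0 ≤ a) (ha1 : a < 1) {z : ℂ}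
    (hz : ‖z‖ ≤ 1) : ‖blaschke a z‖ ≤ (‖z‖ + a) / (1 + a * ‖z‖) := by
  have hden := norm_one_sub_ofReal_mul_pos (a := a) (z := z)
    (by rw [abs_of_nonneg ha0]; nlinarith [norm_nonneg z])
  rw [blaschke, norm_div, div_le_div_iff₀ hden (by positivity),
    ← pow_le_pow_iff_left₀ (by positivity) (by positivity) two_ne_zero, mul_pow, mul_pow,
    norm_sub_ofReal_sq, norm_one_sub_ofReal_mul_sq]
  -- the difference of the two sides is twice this product
  have : 0 ≤ a * (1 - ‖z‖ ^ 2) * (1 - a ^ 2) * (‖z‖ + z.re) := by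
    have hre := neg_le_of_abs_le (abs_re_le_norm z)
    have hz2 : ‖z‖ ^ 2 ≤ 1 := by nlinarith [norm_nonneg z]
    have ha2 : a ^ 2 ≤ 1 := by nlinarith
    exact mul_nonneg (mul_nonneg (mul_nonneg ha0 (by linarith)) (by linarith)) (by linarith)
  linarith

theorem norm_blaschke_le_of_one_le_norm {a : ℝ} (ha0 : 0 ≤ a) (ha1 : a < 1) {z : ℂ}
    (hz : 1 ≤ ‖z‖) (haz : a * ‖z‖ < 1) : ‖blaschke a z‖ ≤ (‖z‖ - a) / (1 - a * ‖z‖) := by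
  have hden := norm_one_sub_ofReal_mul_pos (a := a) (z := z) (by rwa [abs_of_nonneg ha0])
  rw [blaschke, norm_div, div_le_div_iff₀ hden (by linarith),
    ← pow_le_pow_iff_left₀ (by positivity) (by nlinarith) two_ne_zero, mul_pow, mul_pow,
    norm_sub_ofReal_sq, norm_one_sub_ofReal_mul_sq]
  -- the difference of the two sides is twice this product
  have : 0 ≤ a * (‖z‖ ^ 2 - 1) * (1 - a ^ 2) * (‖z‖ - z.re) := by
    have hre := le_of_abs_le (abs_re_le_norm z)
    have hz2 : 1 ≤ ‖z‖ ^ 2 := by nlinarith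
    have ha2 : a ^ 2 ≤ 1 := by nlinarith
    exact mul_nonneg (mul_nonneg (mul_nonneg ha0 (by linarith)) (by linarith)) (by linarith)
  linarith

theorem differentiableAt_blaschke {a : ℝ} {z : ℂ} (h : |a| * ‖z‖ < 1) :
    DifferentiableAt ℂ (blaschke a) z := by
  have := (norm_one_sub_ofReal_mul_pos h).ne'
  unfold blaschke
  fun_prop (disch := simpa using this)

section CoefficientBounds

variable {a : ℝ} {n : ℕ} {c : ℕ → ℂ}

theorem norm_coeff_le_of_norm_blaschke_le (ha : 0 ≤ a)
    (hc : ∀ z : ℂ, ‖z‖ < 1 → HasSum (fun k ↦ c k * z ^ k) ((1 - z ^ 2) * blaschke a z ^ n))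
    {r ρ : ℝ} (hr : 0 < r) (har : a * r < 1) (hρ : ∀ z : ℂ, ‖z‖ = r → ‖blaschke a z‖ ≤ ρ)
    (k : ℕ) : ‖c k‖ ≤ (1 + r ^ 2) * ρ ^ n / r ^ k := by
  have hps := hasFPowerSeriesOnBall_ofScalars_of_hasSum_s11 one_pos (by simpa using hc)
  have hdiff : DifferentiableOn ℂ (fun z ↦ (1 - z ^ 2) * blaschke a z ^ n) (closedBall 0 r) :=
    fun z hz ↦ by
      have hz : ‖z‖ ≤ r := by simpa using hz
      have : DifferentiableAt ℂ (blaschke a) z :=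
        differentiableAt_blaschke (by rw [abs_of_nonneg ha]; nlinarith)
      exact DifferentiableAt.differentiableWithinAt (by fun_prop)
  refine norm_coeff_le_of_hasFPowerSeriesAt hps.hasFPowerSeriesAt hr
    (hdiff.diffContOnCl_ball subset_rfl) (fun z hz ↦ ?_) k
  have hz : ‖z‖ = r := by simpa using hz
  rw [norm_mul, norm_pow]
  gcongr
  · exact (norm_sub_le _ _).trans (by simp [hz])
  · exact hρ z hz

theorem norm_coeff_le_mul_pow_of_norm_blaschke_le (ha : 0 ≤ a)
    (hc : ∀ z : ℂ, ‖z‖ < 1 → HasSum (fun k ↦ c k * z ^ k) ((1 - z ^ 2) * blaschke a z ^ n))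
    {r ρ β : ℝ} (hr : 0 < r) (har : a * r < 1) (hρ : ∀ z : ℂ, ‖z‖ = r → ‖blaschke a z‖ ≤ ρ)
    {k : ℕ} (hk : (r ^ β) ^ n ≤ r ^ k) : ‖c k‖ ≤ (1 + r ^ 2) * (ρ / r ^ β) ^ n := by
  have hρ0 : 0 ≤ ρ := (norm_nonneg _).trans (hρ r (by simp [hr.le]))
  calc ‖c k‖ ≤ (1 + r ^ 2) * ρ ^ n / r ^ k := norm_coeff_le_of_norm_blaschke_le ha hc hr har hρ k
    _ ≤ (1 + r ^ 2) * ρ ^ n / (r ^ β) ^ n := by gcongr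
    _ = (1 + r ^ 2) * (ρ / r ^ β) ^ n := by rw [div_pow, mul_div_assoc]

theorem norm_coeff_le_of_le_mul (ha0 : 0 ≤ a) (ha1 : a < 1)
    (hc : ∀ z : ℂ, ‖z‖ < 1 → HasSum (fun k ↦ c k * z ^ k) ((1 - z ^ 2) * blaschke a z ^ n))
    {r α : ℝ} (hr0 : 0 < r) (hr1 : r < 1) {k : ℕ} (hk : k ≤ α * n) :
    ‖c k‖ ≤ (1 + r ^ 2) * ((r + a) / (1 + a * r) / r ^ α) ^ n :=
  norm_coeff_le_mul_pow_of_norm_blaschke_le ha0 hc hr0 (by nlinarith)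
    (fun z hz ↦ hz ▸ norm_blaschke_le_of_norm_le_one ha0 ha1 (hz ▸ hr1.le))
    (pow_rpow_le_pow_of_le_one hr0 hr1.le hk)

theorem norm_coeff_le_of_div_le (ha0 : 0 ≤ a) (ha1 : a < 1)
    (hc : ∀ z : ℂ, ‖z‖ < 1 → HasSum (fun k ↦ c k * z ^ k) ((1 - z ^ 2) * blaschke a z ^ n))
    {R α : ℝ} (hR1 : 1 < R) (haR : a * R < 1) {k : ℕ} (hk : n / α ≤ k) :
    ‖c k‖ ≤ (1 + R ^ 2) * ((R - a) / (1 - a * R) / R ^ α⁻¹) ^ n :=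
  norm_coeff_le_mul_pow_of_norm_blaschke_le ha0 hc (by linarith) haR
    (fun z hz ↦ hz ▸ norm_blaschke_le_of_one_le_norm ha0 ha1 (hz ▸ hR1.le) (hz ▸ haR))
    (pow_rpow_le_pow_of_one_le hR1.le (by rwa [← div_eq_inv_mul]))

end CoefficientBounds

/-- For λ ∈ (0,1), α₀ = (1−λ)/(1+λ) and fixed α ∈ (0,α₀), the Taylor
coefficients c_{n,k} of F_n(z) = (1−z²)·((z−λ)/(1−λz))ⁿ decay exponentially in n, uniformly
over k ≤ αn and k ≥ n/α. -/
theorem coeff_exponential_decay_outside_range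
    (lam : ℝ) (hlam : lam ∈ Set.Ioo (0 : ℝ) 1)
    (alpha0 : ℝ) (halpha0 : alpha0 = (1 - lam) / (1 + lam))
    (alpha : ℝ) (halpha : alpha ∈ Set.Ioo (0 : ℝ) alpha0)
    (c : ℕ → ℕ → ℂ)
    (hc : ∀ n : ℕ, 1 ≤ n → ∀ z : ℂ, ‖z‖ < 1 →
      Summable (fun k : ℕ => c n k * z ^ k) ∧
      ∑' k : ℕ, c n k * z ^ k =
        (1 - z ^ 2) * ((z - (lam : ℂ)) / (1 - (lam : ℂ) * z)) ^ n) :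
    ∃ M : ℝ, 0 < M ∧ ∃ q : ℝ, 0 < q ∧ q < 1 ∧ ∃ N : ℕ, ∀ n : ℕ, N ≤ n → ∀ k : ℕ,
      ((k : ℝ) ≤ alpha * n ∨ (n : ℝ) / alpha ≤ (k : ℝ)) →
      ‖c n k‖ ≤ M * q ^ n := by
  obtain ⟨hlam0, hlam1⟩ := hlam
  obtain ⟨halpha_pos, halpha_lt⟩ := halpha
  subst halpha0
  obtain ⟨r, hr0, hr1, hr⟩ := exists_lt_one_div_lt_rpow hlam0.le halpha_pos halpha_lt
  obtain ⟨R, hR1, hlamR, hR⟩ := exists_one_lt_div_lt_rpow hlam0 halpha_pos halpha_lt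
  set q₁ := (r + lam) / (1 + lam * r) / r ^ alpha
  set q₂ := (R - lam) / (1 - lam * R) / R ^ alpha⁻¹
  have hq₁ : q₁ < 1 := (div_lt_one (by positivity)).2 hr
  have hq₂ : q₂ < 1 := (div_lt_one (by positivity)).2 hR
  refine ⟨1 + R ^ 2, by positivity, max q₁ q₂, lt_max_of_lt_left (by positivity),
    max_lt hq₁ hq₂, 1, fun n hn k hk ↦ ?_⟩
  have hsum : ∀ z : ℂ, ‖z‖ < 1 →
      HasSum (fun k ↦ c n k * z ^ k) ((1 - z ^ 2) * blaschke lam z ^ n) :=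
    fun z hz ↦ (hc n hn z hz).2 ▸ (hc n hn z hz).1.hasSum
  rcases hk with hk | hk
  · calc ‖c n k‖ ≤ (1 + r ^ 2) * q₁ ^ n :=
          norm_coeff_le_of_le_mul hlam0.le hlam1 hsum hr0 hr1 hk
      _ ≤ (1 + R ^ 2) * max q₁ q₂ ^ n := by
          gcongr
          · linarith
          · exact le_max_left _ _
  · calc ‖c n k‖ ≤ (1 + R ^ 2) * q₂ ^ n :=
          norm_coeff_le_of_div_le hlam0.le hlam1 hsum hR1 hlamR hk
      _ ≤ (1 + R ^ 2) * max q₁ q₂ ^ n := by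
          gcongr
          · exact div_nonneg (div_nonneg (by linarith) (by linarith)) (by positivity)
          · exact le_max_right _ _
end

section
/- Fix λ ∈ (0,1), set α₀ = (1−λ)/(1+λ), let a > 0, and put u = (a(1+λ²) − (1−λ²))/(2λa). Consider the rational function F_a(z) = a/z − 1/(z−λ) − λ/(1−λz) on ℂ∖{0, λ, λ^{−1}}. Then: (0) for z ∈ ℂ∖{0, λ, λ^{−1}}, F_a(z) = 0 if and only if z² − 2uz + 1 = 0; (1) if α₀ < a < α₀^{−1}, the two roots z₊, z₋ of z² − 2uz + 1 are distinct, lie on the unit circle, satisfy z₋ = conj(z₊), and F_a′(z₊) ≠ 0 and F_a′(z₋) ≠ 0; (2) if a = α₀ (respectively a = α₀^{−1}), the quadratic has the double root z₀ = −1 (respectively z₀ = 1), and F_a(z₀) = F_a′(z₀) = 0 while F_a″(z₀) ≠ 0; (3) if a ∉ [α₀, α₀^{−1}], the two roots are real, satisfy z₋ = 1/z₊, and F_a′(z₊) ≠ 0 and F_a′(z₋) ≠ 0. -/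
/-!
Clearing denominators, `z (z - λ) (1 - λ z) F_a(z) = -a λ (z² - 2 u z + 1)`, and no root of this
quadratic is a pole of `F_a` (`a (λ² - 2 u λ + 1) = 1 - λ²`, and the quadratic is palindromic).
Hence near a root `z₀` one has `F_a = N · g` with `N(z) = -a λ (z² - 2 u z + 1)` and `g` holomorphic
and nonvanishing, so `F_a'(z₀) = N'(z₀) g(z₀)` vanishes exactly at a double root, where
`F_a''(z₀) = N''(z₀) g(z₀) = -2 a λ g(z₀) ≠ 0`. The roots are `u ± √(u² - 1)`, and `u` is a strictly
increasing function of `a > 0` equal to `-1` at `α₀` and to `1` at `α₀⁻¹`: the roots are conjugate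
on the unit circle for `α₀ < a < α₀⁻¹`, coincide at `∓1` for `a = α₀^{±1}`, and are real and
mutually inverse otherwise.
-/

open Complex Filter Set Topology

section ProductRule

variable {𝕜 : Type*} [NontriviallyNormedField 𝕜] {f g : 𝕜 → 𝕜} {x : 𝕜}

theorem deriv_mul_of_eq_zero (hf : DifferentiableAt 𝕜 f x) (hg : DifferentiableAt 𝕜 g x)
    (h₀ : f x = 0) : deriv (f * g) x = deriv f x * g x := by
  rw [deriv_mul hf hg, h₀, zero_mul, add_zero]

theorem deriv_deriv_mul_of_eq_zero [CompleteSpace 𝕜] (hf : AnalyticAt 𝕜 f x)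
    (hg : AnalyticAt 𝕜 g x) (h₀ : f x = 0) (h₁ : deriv f x = 0) :
    deriv (deriv (f * g)) x = deriv (deriv f) x * g x := by
  have hprod : deriv (f * g) =ᶠ[𝓝 x] deriv f * g + f * deriv g := by
    filter_upwards [hf.eventually_analyticAt, hg.eventually_analyticAt] with y hfy hgy
    exact deriv_mul hfy.differentiableAt hgy.differentiableAt
  have hf' := hf.deriv.differentiableAt
  have hg' := hg.deriv.differentiableAt
  rw [hprod.deriv_eq, deriv_add (hf'.mul hg.differentiableAt) (hf.differentiableAt.mul hg'),
    deriv_mul hf' hg.differentiableAt, deriv_mul hf.differentiableAt hg']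
  simp [h₀, h₁]

end ProductRule

theorem hasDerivAt_mul_quadratic (c u z : ℂ) :
    HasDerivAt (fun w => c * (w ^ 2 - 2 * u * w + 1)) (c * (2 * z - 2 * u)) z := by
  have := ((((hasDerivAt_id' z).pow 2).sub ((hasDerivAt_id' z).const_mul (2 * u))).add_const 1)
  exact (this.const_mul c).congr_deriv (by norm_num)

theorem sq_sub_two_mul_add_one_eq_zero_iff {R : Type*} [CommRing R] [IsDomain R] {u s z : R}
    (hs : s ^ 2 = u ^ 2 - 1) : z ^ 2 - 2 * u * z + 1 = 0 ↔ z = u + s ∨ z = u - s := by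
  rw [← sub_eq_zero (b := u + s), ← sub_eq_zero (b := u - s), ← mul_eq_zero]
  constructor <;> intro h
  · linear_combination h - hs
  · linear_combination h + hs

theorem exists_unimodular_roots {u : ℝ} (hu : u ^ 2 < 1) :
    ∃ zp zm : ℂ, zp ≠ zm ∧
      zp ^ 2 - 2 * (u : ℂ) * zp + 1 = 0 ∧ zm ^ 2 - 2 * (u : ℂ) * zm + 1 = 0 ∧
      (∀ z : ℂ, z ^ 2 - 2 * (u : ℂ) * z + 1 = 0 → z = zp ∨ z = zm) ∧
      ‖zp‖ = 1 ∧ ‖zm‖ = 1 ∧ zm = (starRingEnd ℂ) zp ∧ zp ≠ u ∧ zm ≠ u := by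
  set t := √(1 - u ^ 2)
  have ht : t ^ 2 = 1 - u ^ 2 := Real.sq_sqrt (by linarith)
  have ht0 : t ≠ 0 := (Real.sqrt_pos.mpr (by linarith)).ne'
  have hs : (t * I : ℂ) ^ 2 = (u : ℂ) ^ 2 - 1 := by
    have htC : (t : ℂ) ^ 2 = 1 - (u : ℂ) ^ 2 := by exact_mod_cast ht
    linear_combination (t : ℂ) ^ 2 * I_sq - htC
  have hroots := fun z => sq_sub_two_mul_add_one_eq_zero_iff (z := z) hs
  have hnorm : ‖(u : ℂ) + t * I‖ = 1 := by
    rw [norm_add_mul_I, ht, add_sub_cancel, Real.sqrt_one]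
  have hconj : (u : ℂ) - t * I = (starRingEnd ℂ) (u + t * I) := by simp [sub_eq_add_neg]
  refine ⟨u + t * I, u - t * I, by simp [sub_eq_add_neg, CharZero.eq_neg_self_iff, ht0],
    (hroots _).2 (.inl rfl), (hroots _).2 (.inr rfl), fun z => (hroots z).1, hnorm,
    by rw [hconj, norm_conj, hnorm], hconj, by simp [ht0], by simp [ht0]⟩

theorem exists_real_reciprocal_roots {u : ℝ} (hu : 1 < u ^ 2) :
    ∃ zp zm : ℂ, zp ≠ zm ∧
      zp ^ 2 - 2 * (u : ℂ) * zp + 1 = 0 ∧ zm ^ 2 - 2 * (u : ℂ) * zm + 1 = 0 ∧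
      (∀ z : ℂ, z ^ 2 - 2 * (u : ℂ) * z + 1 = 0 → z = zp ∨ z = zm) ∧
      zp.im = 0 ∧ zm.im = 0 ∧ zm = zp⁻¹ ∧ zp ≠ u ∧ zm ≠ u := by
  set t := √(u ^ 2 - 1)
  have ht0 : t ≠ 0 := (Real.sqrt_pos.mpr (by linarith)).ne'
  have hs : (t : ℂ) ^ 2 = (u : ℂ) ^ 2 - 1 := by exact_mod_cast Real.sq_sqrt (by linarith)
  have hroots := fun z => sq_sub_two_mul_add_one_eq_zero_iff (z := z) hs
  refine ⟨u + t, u - t, by simp [sub_eq_add_neg, CharZero.eq_neg_self_iff, ht0],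
    (hroots _).2 (.inl rfl), (hroots _).2 (.inr rfl), fun z => (hroots z).1, by simp, by simp,
    eq_inv_of_mul_eq_one_left (by linear_combination -hs), by simp [ht0], by simp [ht0]⟩

/-- The parameter `u` of the statement. -/
noncomputable def stationaryParam (lam a : ℝ) : ℝ :=
  (a * (1 + lam ^ 2) - (1 - lam ^ 2)) / (2 * lam * a)

section StationaryParam

variable {lam a : ℝ}

theorem two_mul_mul_stationaryParam (hlam : lam ≠ 0) (ha : a ≠ 0) :
    2 * lam * a * stationaryParam lam a = a * (1 + lam ^ 2) - (1 - lam ^ 2) := by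
  unfold stationaryParam
  field_simp

theorem stationaryParam_strictMonoOn (hlam : lam ∈ Ioo 0 1) :
    StrictMonoOn (stationaryParam lam) (Ioi 0) := by
  obtain ⟨hl0, hl1⟩ := hlam
  intro a (ha : 0 < a) b (hb : 0 < b) hab
  rw [stationaryParam, stationaryParam, div_lt_div_iff₀ (by positivity) (by positivity)]
  have hc : 0 < (1 - lam ^ 2) * (2 * lam) := by nlinarith
  nlinarith [mul_pos hc (sub_pos.2 hab)]

theorem stationaryParam_alpha0 (hlam : lam ∈ Ioo 0 1) :
    stationaryParam lam ((1 - lam) / (1 + lam)) = -1 := by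
  obtain ⟨hl0, hl1⟩ := hlam
  have : 1 - lam ≠ 0 := by linarith
  have : 1 + lam ≠ 0 := by linarith
  rw [stationaryParam]
  field_simp
  ring

theorem stationaryParam_alpha0_inv (hlam : lam ∈ Ioo 0 1) :
    stationaryParam lam ((1 + lam) / (1 - lam)) = 1 := by
  obtain ⟨hl0, hl1⟩ := hlam
  have : 1 - lam ≠ 0 := by linarith
  have : 1 + lam ≠ 0 := by linarith
  rw [stationaryParam]
  field_simp
  ring

theorem sq_stationaryParam_lt_one (hlam : lam ∈ Ioo 0 1) (h₁ : (1 - lam) / (1 + lam) < a)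
    (h₂ : a < (1 + lam) / (1 - lam)) : stationaryParam lam a ^ 2 < 1 := by
  have hα₀ : 0 < (1 - lam) / (1 + lam) := div_pos (sub_pos.2 hlam.2) (by linarith [hlam.1])
  have ha : 0 < a := hα₀.trans h₁
  have hlow := stationaryParam_strictMonoOn hlam hα₀ ha h₁
  have hhigh := stationaryParam_strictMonoOn hlam ha (ha.trans h₂) h₂
  rw [stationaryParam_alpha0 hlam] at hlow
  rw [stationaryParam_alpha0_inv hlam] at hhigh
  nlinarith

theorem one_lt_sq_stationaryParam (hlam : lam ∈ Ioo 0 1) (ha : 0 < a)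
    (h : a ∉ Icc ((1 - lam) / (1 + lam)) ((1 + lam) / (1 - lam))) :
    1 < stationaryParam lam a ^ 2 := by
  rw [mem_Icc, not_and_or, not_le, not_le] at h
  rcases h with h | h
  · have hα₀ : 0 < (1 - lam) / (1 + lam) := div_pos (sub_pos.2 hlam.2) (by linarith [hlam.1])
    have hlow := stationaryParam_strictMonoOn hlam ha hα₀ h
    rw [stationaryParam_alpha0 hlam] at hlow
    nlinarith
  · have hα₀' : 0 < (1 + lam) / (1 - lam) := div_pos (by linarith [hlam.1]) (sub_pos.2 hlam.2)
    have hhigh := stationaryParam_strictMonoOn hlam hα₀' ha h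
    rw [stationaryParam_alpha0_inv hlam] at hhigh
    nlinarith

end StationaryParam

/-- The function `F_a` of the statement, with `a` and `λ` complex. -/
noncomputable def phaseDeriv (a lam z : ℂ) : ℂ := a / z - 1 / (z - lam) - lam / (1 - lam * z)

section PhaseDeriv

variable {a lam u z : ℂ}

theorem phaseDeriv_eq (hu : 2 * lam * a * u = a * (1 + lam ^ 2) - (1 - lam ^ 2))
    (hD : z * (z - lam) * (1 - lam * z) ≠ 0) :
    phaseDeriv a lam z =
      -(a * lam) * (z ^ 2 - 2 * u * z + 1) * (z * (z - lam) * (1 - lam * z))⁻¹ := by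
  obtain ⟨⟨hz, hzl⟩, hlz⟩ : (z ≠ 0 ∧ z - lam ≠ 0) ∧ 1 - lam * z ≠ 0 := by
    simpa only [mul_ne_zero_iff] using hD
  have hzl' : 1 - z * lam ≠ 0 := by rwa [mul_comm]
  rw [phaseDeriv, eq_mul_inv_iff_mul_eq₀ hD]
  field_simp
  linear_combination (-z) * hu

theorem phaseDeriv_eventuallyEq (hu : 2 * lam * a * u = a * (1 + lam ^ 2) - (1 - lam ^ 2))
    (hD : z * (z - lam) * (1 - lam * z) ≠ 0) :
    phaseDeriv a lam =ᶠ[𝓝 z] (fun w => -(a * lam) * (w ^ 2 - 2 * u * w + 1)) *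
      fun w => (w * (w - lam) * (1 - lam * w))⁻¹ := by
  have hcont : Continuous fun w : ℂ => w * (w - lam) * (1 - lam * w) := by fun_prop
  filter_upwards [hcont.continuousAt.eventually_ne hD] with w hw
  exact phaseDeriv_eq hu hw

theorem phaseDeriv_eq_zero_iff (hu : 2 * lam * a * u = a * (1 + lam ^ 2) - (1 - lam ^ 2))
    (ha : a ≠ 0) (hlam : lam ≠ 0) (hD : z * (z - lam) * (1 - lam * z) ≠ 0) :
    phaseDeriv a lam z = 0 ↔ z ^ 2 - 2 * u * z + 1 = 0 := by
  rw [phaseDeriv_eq hu hD, mul_eq_zero, or_iff_left (inv_ne_zero hD), mul_eq_zero,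
    or_iff_right (neg_ne_zero.mpr (mul_ne_zero ha hlam))]

theorem mul_sub_mul_ne_zero_of_root (hu : 2 * lam * a * u = a * (1 + lam ^ 2) - (1 - lam ^ 2))
    (hlam : lam ^ 2 ≠ 1) (hz : z ^ 2 - 2 * u * z + 1 = 0) :
    z * (z - lam) * (1 - lam * z) ≠ 0 := by
  simp only [ne_eq, mul_eq_zero, sub_eq_zero, not_or]
  refine ⟨⟨?_, ?_⟩, ?_⟩
  · rintro rfl
    norm_num at hz
  · rintro rfl
    exact hlam (by linear_combination -a * hz - hu)
  · intro hlz
    exact hlam (by linear_combination -a * lam ^ 2 * hz - lam * z * hu -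
      (a * lam * z - (a * lam ^ 2 - 1 + lam ^ 2)) * hlz)

theorem deriv_phaseDeriv_of_root (hu : 2 * lam * a * u = a * (1 + lam ^ 2) - (1 - lam ^ 2))
    (hD : z * (z - lam) * (1 - lam * z) ≠ 0) (hz : z ^ 2 - 2 * u * z + 1 = 0) :
    deriv (phaseDeriv a lam) z =
      -(a * lam) * (2 * z - 2 * u) * (z * (z - lam) * (1 - lam * z))⁻¹ := by
  rw [(phaseDeriv_eventuallyEq hu hD).deriv_eq, deriv_mul_of_eq_zero,
    (hasDerivAt_mul_quadratic _ _ _).deriv]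
  · exact (hasDerivAt_mul_quadratic _ _ _).differentiableAt
  · fun_prop (disch := assumption)
  · simp [hz]

theorem deriv_deriv_phaseDeriv_of_root
    (hu : 2 * lam * a * u = a * (1 + lam ^ 2) - (1 - lam ^ 2))
    (hD : z * (z - lam) * (1 - lam * z) ≠ 0) (hz : z ^ 2 - 2 * u * z + 1 = 0) (hzu : z = u) :
    deriv (deriv (phaseDeriv a lam)) z = -(a * lam) * 2 * (z * (z - lam) * (1 - lam * z))⁻¹ := by
  have hN : deriv (fun w => -(a * lam) * (w ^ 2 - 2 * u * w + 1)) =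
      fun w => -(a * lam) * (2 * w - 2 * u) :=
    funext fun w => (hasDerivAt_mul_quadratic _ _ w).deriv
  have hN' : deriv (fun w => -(a * lam) * (2 * w - 2 * u)) z = -(a * lam) * 2 :=
    ((((hasDerivAt_id' z).const_mul 2).sub_const (2 * u)).const_mul _).deriv.trans (by ring)
  rw [(phaseDeriv_eventuallyEq hu hD).deriv.deriv_eq, deriv_deriv_mul_of_eq_zero (by fun_prop)
    (by fun_prop (disch := assumption)) (by simp [hz]) (by rw [hN, hzu]; ring), hN, hN']

theorem deriv_phaseDeriv_ne_zero_of_simple_root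
    (hu : 2 * lam * a * u = a * (1 + lam ^ 2) - (1 - lam ^ 2)) (ha : a ≠ 0) (hlam : lam ≠ 0)
    (hlam₂ : lam ^ 2 ≠ 1) (hz : z ^ 2 - 2 * u * z + 1 = 0) (hzu : z ≠ u) :
    deriv (phaseDeriv a lam) z ≠ 0 := by
  have hD := mul_sub_mul_ne_zero_of_root hu hlam₂ hz
  have hzu' : 2 * z - 2 * u ≠ 0 := fun h => hzu (by linear_combination h / 2)
  rw [deriv_phaseDeriv_of_root hu hD hz]
  exact mul_ne_zero (mul_ne_zero (neg_ne_zero.mpr (mul_ne_zero ha hlam)) hzu') (inv_ne_zero hD)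

theorem phaseDeriv_double_root (hu : 2 * lam * a * u = a * (1 + lam ^ 2) - (1 - lam ^ 2))
    (ha : a ≠ 0) (hlam : lam ≠ 0) (hlam₂ : lam ^ 2 ≠ 1) (hu₁ : u ^ 2 = 1) :
    phaseDeriv a lam u = 0 ∧ deriv (phaseDeriv a lam) u = 0 ∧
      deriv (deriv (phaseDeriv a lam)) u ≠ 0 := by
  have hz : u ^ 2 - 2 * u * u + 1 = 0 := by linear_combination -hu₁
  have hD := mul_sub_mul_ne_zero_of_root hu hlam₂ hz
  refine ⟨(phaseDeriv_eq_zero_iff hu ha hlam hD).2 hz,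
    by rw [deriv_phaseDeriv_of_root hu hD hz]; ring, ?_⟩
  rw [deriv_deriv_phaseDeriv_of_root hu hD hz rfl]
  exact mul_ne_zero (mul_ne_zero (neg_ne_zero.mpr (mul_ne_zero ha hlam)) two_ne_zero)
    (inv_ne_zero hD)

end PhaseDeriv

/-- Stationary points of f_a(z) = log(zᵃ(1−λz)/(z−λ)).  With
F_a(z) = a/z − 1/(z−λ) − λ/(1−λz) and u = (a(1+λ²)−(1−λ²))/(2λa):
(0) F_a(z) = 0 iff z² − 2uz + 1 = 0 (for z ∉ {0, λ, λ⁻¹});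
(1) for α₀ < a < α₀⁻¹ the quadratic has two distinct unimodular conjugate roots, both
    simple stationary points of f_a;
(2) for a = α₀ (resp. a = α₀⁻¹) it has the double root −1 (resp. 1), where F_a and F_a′
    vanish but F_a″ does not;
(3) for a ∉ [α₀, α₀⁻¹] it has two distinct real roots with z₋ = 1/z₊, both simple
    stationary points of f_a. -/
theorem stationary_points_of_phase_function
    (lam a : ℝ) (hlam : lam ∈ Set.Ioo (0 : ℝ) 1) (ha : 0 < a)
    (alpha0 : ℝ) (halpha0 : alpha0 = (1 - lam) / (1 + lam))
    (u : ℝ) (hu : u = (a * (1 + lam ^ 2) - (1 - lam ^ 2)) / (2 * lam * a))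
    (F : ℂ → ℂ)
    (hF : ∀ z : ℂ, F z = (a : ℂ) / z - 1 / (z - (lam : ℂ)) - (lam : ℂ) / (1 - (lam : ℂ) * z)) :
    (∀ z : ℂ, z ≠ 0 → z ≠ (lam : ℂ) → z ≠ ((lam : ℂ))⁻¹ →
      (F z = 0 ↔ z ^ 2 - 2 * (u : ℂ) * z + 1 = 0)) ∧
    (alpha0 < a → a < alpha0⁻¹ →
      ∃ zp zm : ℂ, zp ≠ zm ∧
        zp ^ 2 - 2 * (u : ℂ) * zp + 1 = 0 ∧ zm ^ 2 - 2 * (u : ℂ) * zm + 1 = 0 ∧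
        (∀ z : ℂ, z ^ 2 - 2 * (u : ℂ) * z + 1 = 0 → z = zp ∨ z = zm) ∧
        ‖zp‖ = 1 ∧ ‖zm‖ = 1 ∧ zm = (starRingEnd ℂ) zp ∧
        deriv F zp ≠ 0 ∧ deriv F zm ≠ 0) ∧
    (a = alpha0 →
      (∀ z : ℂ, z ^ 2 - 2 * (u : ℂ) * z + 1 = (z + 1) ^ 2) ∧
      F (-1) = 0 ∧ deriv F (-1) = 0 ∧ deriv (deriv F) (-1) ≠ 0) ∧
    (a = alpha0⁻¹ →
      (∀ z : ℂ, z ^ 2 - 2 * (u : ℂ) * z + 1 = (z - 1) ^ 2) ∧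
      F 1 = 0 ∧ deriv F 1 = 0 ∧ deriv (deriv F) 1 ≠ 0) ∧
    (a ∉ Set.Icc alpha0 alpha0⁻¹ →
      ∃ zp zm : ℂ, zp ≠ zm ∧
        zp ^ 2 - 2 * (u : ℂ) * zp + 1 = 0 ∧ zm ^ 2 - 2 * (u : ℂ) * zm + 1 = 0 ∧
        (∀ z : ℂ, z ^ 2 - 2 * (u : ℂ) * z + 1 = 0 → z = zp ∨ z = zm) ∧
        zp.im = 0 ∧ zm.im = 0 ∧ zm = zp⁻¹ ∧
        deriv F zp ≠ 0 ∧ deriv F zm ≠ 0) := by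
  obtain rfl : F = phaseDeriv a lam := funext hF
  obtain rfl : u = stationaryParam lam a := hu
  rw [halpha0, inv_div]
  have hrel : 2 * (lam : ℂ) * a * (stationaryParam lam a : ℂ) =
      a * (1 + lam ^ 2) - (1 - lam ^ 2) := by
    exact_mod_cast two_mul_mul_stationaryParam hlam.1.ne' ha.ne'
  have haC : (a : ℂ) ≠ 0 := by exact_mod_cast ha.ne'
  have hlC : (lam : ℂ) ≠ 0 := by exact_mod_cast hlam.1.ne'
  have hl₂ : (lam : ℂ) ^ 2 ≠ 1 := by
    exact_mod_cast (by nlinarith [hlam.1, hlam.2] : lam ^ 2 < 1).ne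
  have hsimple := fun z => deriv_phaseDeriv_ne_zero_of_simple_root (z := z) hrel haC hlC hl₂
  refine ⟨fun z hz hzl hzl' => phaseDeriv_eq_zero_iff hrel haC hlC ?_, fun h₁ h₂ => ?_,
    fun h => ?_, fun h => ?_, fun h => ?_⟩
  · have hlz : 1 - (lam : ℂ) * z ≠ 0 :=
      sub_ne_zero.2 fun h => hzl' (eq_inv_of_mul_eq_one_right h.symm)
    exact mul_ne_zero (mul_ne_zero hz (sub_ne_zero.2 hzl)) hlz
  · obtain ⟨zp, zm, hne, hp, hm, hall, hnp, hnm, hconj, hpu, hmu⟩ :=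
      exists_unimodular_roots (sq_stationaryParam_lt_one hlam h₁ h₂)
    exact ⟨zp, zm, hne, hp, hm, hall, hnp, hnm, hconj, hsimple zp hp hpu, hsimple zm hm hmu⟩
  · have hu : (stationaryParam lam a : ℂ) = -1 := by
      rw [h, stationaryParam_alpha0 hlam]; norm_num
    rw [hu] at hrel ⊢
    exact ⟨fun z => by ring, phaseDeriv_double_root hrel haC hlC hl₂ (by norm_num)⟩
  · have hu : (stationaryParam lam a : ℂ) = 1 := by
      rw [h, stationaryParam_alpha0_inv hlam]; norm_num
    rw [hu] at hrel ⊢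
    exact ⟨fun z => by ring, phaseDeriv_double_root hrel haC hlC hl₂ (by norm_num)⟩
  · obtain ⟨zp, zm, hne, hp, hm, hall, hp0, hm0, hinv, hpu, hmu⟩ :=
      exists_real_reciprocal_roots (one_lt_sq_stationaryParam hlam ha h)
    exact ⟨zp, zm, hne, hp, hm, hall, hp0, hm0, hinv, hsimple zp hp hpu, hsimple zm hm hmu⟩
end

section
/- Let T be an n×n complex matrix that is power bounded by C, and let m be a polynomial with m(T) = 0. Let a be a polynomial, and suppose f and g are holomorphic on 𝔻 with absolutely summable Taylor coefficients and f(z) = a(z) + m(z)·g(z) for all z ∈ 𝔻. Then the series ∑_{k≥0} f̂(k)·T^k converges, equals a(T), and ‖a(T)‖ ≤ C · ∑_{k≥0} |f̂(k)|. (This is the Wiener-algebra instance of Nikolski's lifting inequality ‖a(T)‖ ≤ C·‖a‖_{W/BW}.) -/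
/-!
By uniqueness of Taylor coefficients, the identity `f = a + m * g` on the unit disk is an identity
`F = a + m * G` of formal power series with absolutely summable coefficients. For a power bounded
`T`, the map `φ ↦ ∑ φ̂(k) • T ^ k` on such series is multiplicative (Cauchy product) and agrees with
`Polynomial.aeval T` on polynomials, so it sends `F` to `a(T) + m(T) * G(T) = a(T)`; the norm bound
is the triangle inequality for the series.
-/

open Finset Polynomial PowerSeries

section WienerAlgebra

variable {𝕜 A : Type*}

theorem Polynomial.summable_norm_coeff [SeminormedRing 𝕜] (p : 𝕜[X]) :
    Summable fun k => ‖p.coeff k‖ :=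
  summable_of_ne_finset_zero (s := range (p.natDegree + 1)) fun k hk => by
    rw [coeff_eq_zero_of_natDegree_lt (by simpa using hk), norm_zero]

theorem Polynomial.hasSum_coeff_smul_pow [CommSemiring 𝕜] [Semiring A] [Algebra 𝕜 A]
    [TopologicalSpace A] (p : 𝕜[X]) (x : A) :
    HasSum (fun k => p.coeff k • x ^ k) (aeval x p) := by
  rw [aeval_eq_sum_range]
  exact hasSum_sum_of_ne_finset_zero fun k hk => by
    rw [coeff_eq_zero_of_natDegree_lt (by simpa using hk), zero_smul]

variable (𝕜) in
def PowerSeries.wienerAlgebra_s17 [NormedField 𝕜] : Subalgebra 𝕜 𝕜⟦X⟧ where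
  carrier := {φ | Summable fun k => ‖coeff k φ‖}
  mul_mem' {φ ψ} hφ hψ := by
    simpa only [Set.mem_ofPred_eq, coeff_mul] using
      summable_norm_sum_mul_antidiagonal_of_summable_norm hφ hψ
  add_mem' {φ ψ} hφ hψ := (hφ.add hψ).of_nonneg_of_le (fun _ => norm_nonneg _) fun k => by
    simpa only [map_add] using norm_add_le _ _
  algebraMap_mem' c := by
    simpa [← Polynomial.coe_C] using (Polynomial.C c).summable_norm_coeff

theorem PowerSeries.mem_wienerAlgebra_s17 [NormedField 𝕜] {φ : 𝕜⟦X⟧} :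
    φ ∈ wienerAlgebra_s17 𝕜 ↔ Summable fun k => ‖coeff k φ‖ := Iff.rfl

theorem Polynomial.coe_mem_wienerAlgebra [NormedField 𝕜] (p : 𝕜[X]) :
    (p : 𝕜⟦X⟧) ∈ wienerAlgebra_s17 𝕜 := by
  simpa [mem_wienerAlgebra_s17] using p.summable_norm_coeff

theorem PowerSeries.eq_of_forall_tsum_coeff_mul_pow_eq [NontriviallyNormedField 𝕜]
    [CompleteSpace 𝕜] {φ ψ : 𝕜⟦X⟧} (hφ : φ ∈ wienerAlgebra_s17 𝕜) (hψ : ψ ∈ wienerAlgebra_s17 𝕜)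
    (h : ∀ z : 𝕜, ‖z‖ < 1 → ∑' k, coeff k φ * z ^ k = ∑' k, coeff k ψ * z ^ k) :
    φ = ψ := by
  have hasFPowerSeriesAt_tsum {θ : 𝕜⟦X⟧} (hθ : θ ∈ wienerAlgebra_s17 𝕜) :
      HasFPowerSeriesAt (fun z => ∑' k, coeff k θ * z ^ k)
        (FormalMultilinearSeries.ofScalars 𝕜 fun k => coeff k θ) 0 := by
    have hrad : 1 ≤ (FormalMultilinearSeries.ofScalars 𝕜 fun k => coeff k θ).radius := by
      exact_mod_cast FormalMultilinearSeries.le_radius_of_summable_norm (r := 1) _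
        (by simpa using mem_wienerAlgebra_s17.mp hθ)
    convert ((FormalMultilinearSeries.ofScalars 𝕜 fun k => coeff k θ).hasFPowerSeriesOnBall
      (zero_lt_one.trans_le hrad)).hasFPowerSeriesAt using 1
    funext z
    show _ = FormalMultilinearSeries.ofScalarsSum _ z
    simp only [FormalMultilinearSeries.ofScalars_sum_eq, smul_eq_mul]
  ext k
  refine congrFun (FormalMultilinearSeries.ofScalars_series_injective 𝕜 𝕜
    ((hasFPowerSeriesAt_tsum hφ).eq_formalMultilinearSeries_of_eventually
      (hasFPowerSeriesAt_tsum hψ) ?_)) k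
  filter_upwards [Metric.ball_mem_nhds (0 : 𝕜) zero_lt_one] with z hz
  exact h z (by simpa using hz)

section PowerBounded

variable [NormedField 𝕜] [NormedRing A] [NormedAlgebra 𝕜 A] {x : A} {C : ℝ}

theorem norm_smul_pow_le_of_forall_norm_pow_le (hx : ∀ k, ‖x ^ k‖ ≤ C) (c : 𝕜) (k : ℕ) :
    ‖c • x ^ k‖ ≤ ‖c‖ * C :=
  (norm_smul_le c _).trans (mul_le_mul_of_nonneg_left (hx k) (norm_nonneg c))

theorem summable_norm_smul_pow (hx : ∀ k, ‖x ^ k‖ ≤ C) {c : ℕ → 𝕜}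
    (hc : Summable fun k => ‖c k‖) : Summable fun k => ‖c k • x ^ k‖ :=
  (hc.mul_right C).of_nonneg_of_le (fun _ => norm_nonneg _)
    fun k => norm_smul_pow_le_of_forall_norm_pow_le hx (c k) k

theorem norm_le_of_hasSum_smul_pow (hx : ∀ k, ‖x ^ k‖ ≤ C) {c : ℕ → 𝕜}
    (hc : Summable fun k => ‖c k‖) {y : A} (hy : HasSum (fun k => c k • x ^ k) y) :
    ‖y‖ ≤ C * ∑' k, ‖c k‖ := by
  rw [mul_comm, ← tsum_mul_right]
  exact hy.norm_le_of_bounded (hc.mul_right C).hasSum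
    fun k => norm_smul_pow_le_of_forall_norm_pow_le hx (c k) k

variable [CompleteSpace A]

theorem PowerSeries.hasSum_coeff_mul_smul_pow (hx : ∀ k, ‖x ^ k‖ ≤ C) {φ ψ : 𝕜⟦X⟧}
    (hφ : φ ∈ wienerAlgebra_s17 𝕜) (hψ : ψ ∈ wienerAlgebra_s17 𝕜) :
    HasSum (fun k => coeff k (φ * ψ) • x ^ k)
      ((∑' k, coeff k φ • x ^ k) * ∑' k, coeff k ψ • x ^ k) := by
  have hcauchy (n : ℕ) : ∑ kl ∈ antidiagonal n,
      (coeff kl.1 φ • x ^ kl.1) * (coeff kl.2 ψ • x ^ kl.2) = coeff n (φ * ψ) • x ^ n := by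
    rw [coeff_mul, sum_smul]
    refine sum_congr rfl fun kl hkl => ?_
    rw [smul_mul_smul_comm, ← pow_add, mem_antidiagonal.mp hkl]
  rw [tsum_mul_tsum_eq_tsum_sum_antidiagonal_of_summable_norm (summable_norm_smul_pow hx hφ)
    (summable_norm_smul_pow hx hψ), tsum_congr hcauchy]
  have hφψ : φ * ψ ∈ wienerAlgebra_s17 𝕜 := mul_mem hφ hψ
  exact (summable_norm_smul_pow hx hφψ).of_norm.hasSum

theorem PowerSeries.hasSum_coeff_add_mul_smul_pow (hx : ∀ k, ‖x ^ k‖ ≤ C) (p q : 𝕜[X])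
    {ψ : 𝕜⟦X⟧} (hψ : ψ ∈ wienerAlgebra_s17 𝕜) :
    HasSum (fun k => coeff k ((p : 𝕜⟦X⟧) + (q : 𝕜⟦X⟧) * ψ) • x ^ k)
      (Polynomial.aeval x p + Polynomial.aeval x q * ∑' k, coeff k ψ • x ^ k) := by
  have hp : HasSum (fun k => coeff k (p : 𝕜⟦X⟧) • x ^ k) (Polynomial.aeval x p) := by
    simpa only [Polynomial.coeff_coe] using p.hasSum_coeff_smul_pow x
  have hqψ := hasSum_coeff_mul_smul_pow (φ := (q : 𝕜⟦X⟧)) hx q.coe_mem_wienerAlgebra hψ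
  simp only [Polynomial.coeff_coe, (q.hasSum_coeff_smul_pow x).tsum_eq] at hqψ
  simpa only [map_add, add_smul] using hp.add hqψ

end PowerBounded

end WienerAlgebra

theorem nikolski_lifting_wiener_general
    {E : Type*} [NormedAddCommGroup E] [NormedSpace ℂ E] [FiniteDimensional ℂ E]
    (T : E →L[ℂ] E) (C : ℝ) (hpb : ∀ j : ℕ, ‖T ^ j‖ ≤ C)
    (m a : Polynomial ℂ) (hm : Polynomial.aeval T m = 0)
    (fc gc : ℕ → ℂ)
    (hfc : Summable fun k : ℕ => ‖fc k‖) (hgc : Summable fun k : ℕ => ‖gc k‖)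
    (hrep : ∀ z : ℂ, ‖z‖ < 1 →
      ∑' k : ℕ, fc k * z ^ k = a.eval z + m.eval z * ∑' k : ℕ, gc k * z ^ k) :
    HasSum (fun k : ℕ => fc k • T ^ k) (Polynomial.aeval T a) ∧
    ‖Polynomial.aeval T a‖ ≤ C * ∑' k : ℕ, ‖fc k‖ := by
  have hF : mk fc ∈ wienerAlgebra_s17 ℂ := by simpa [mem_wienerAlgebra_s17] using hfc
  have hG : mk gc ∈ wienerAlgebra_s17 ℂ := by simpa [mem_wienerAlgebra_s17] using hgc
  have hamg : (a : ℂ⟦X⟧) + m * mk gc ∈ wienerAlgebra_s17 ℂ :=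
    add_mem a.coe_mem_wienerAlgebra (mul_mem m.coe_mem_wienerAlgebra hG)
  have hlift : mk fc = a + m * mk gc := by
    refine eq_of_forall_tsum_coeff_mul_pow_eq hF hamg fun z hz => ?_
    have hz_pow (k : ℕ) : ‖z ^ k‖ ≤ 1 := by simpa using pow_le_one₀ (norm_nonneg z) hz.le
    simpa [hrep z hz] using (hasSum_coeff_add_mul_smul_pow hz_pow a m hG).tsum_eq.symm
  have hsum := hasSum_coeff_add_mul_smul_pow hpb a m hG
  rw [hm, zero_mul, add_zero, ← hlift] at hsum
  simp only [coeff_mk] at hsum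
  exact ⟨hsum, norm_le_of_hasSum_smul_pow hpb hfc hsum⟩

/-- Wiener-algebra instance of Nikolski's lifting inequality: If T is power
bounded by C, m(T) = 0, and f = a + m·g on 𝔻 where f, g have absolutely summable Taylor
coefficients (given by the sequences `fc`, `gc`) and a, m are polynomials, then
∑_{k≥0} f̂(k)·T^k converges to a(T) and ‖a(T)‖ ≤ C·∑_{k≥0} |f̂(k)|. -/
theorem nikolski_lifting_wiener
    {E : Type*} [NormedAddCommGroup E] [NormedSpace ℂ E] [FiniteDimensional ℂ E]
    (n : ℕ) (hn : 1 ≤ n) (hdim : Module.finrank ℂ E = n)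
    (T : E →L[ℂ] E) (C : ℝ) (hC : 1 ≤ C) (hpb : ∀ j : ℕ, ‖T ^ j‖ ≤ C)
    (m a : Polynomial ℂ) (hm : Polynomial.aeval T m = 0)
    (fc gc : ℕ → ℂ)
    (hfc : Summable fun k : ℕ => ‖fc k‖) (hgc : Summable fun k : ℕ => ‖gc k‖)
    (hrep : ∀ z : ℂ, ‖z‖ < 1 →
      ∑' k : ℕ, fc k * z ^ k = a.eval z + m.eval z * ∑' k : ℕ, gc k * z ^ k) :
    HasSum (fun k : ℕ => fc k • T ^ k) (Polynomial.aeval T a) ∧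
    ‖Polynomial.aeval T a‖ ≤ C * ∑' k : ℕ, ‖fc k‖ :=
  nikolski_lifting_wiener_general T C hpb m a hm fc gc hfc hgc hrep
end
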